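/- arXiv:1605.06702 — 8 statements merged into one kernel-verified Lean document; each statement's English description precedes it below -/
import Mathlib

section
/- Let F : X' × Y' × Z' → F and G : X'' × Y'' × Z'' → F be functions on finite sets. Then slicerank(F ⊗ G) ≤ slicerank(F) · tensorrank(G), where (F ⊗ G)((x',x''),(y',y''),(z',z'')) = F(x',y',z') G(x'',y'',z''). -/
/-!
Write `F = ∑ᵢ tᵢ` with `sliceRank F` slice terms and `G = ∑ⱼ aⱼ ⊗ bⱼ ⊗ cⱼ` with `tensorRank G`
rank-one terms. Then `F ⊗ G = ∑_{i,j} tᵢ ⊗ (aⱼ ⊗ bⱼ ⊗ cⱼ)`, and each summand is again a slice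
term: the two variables of the slice `tᵢ` absorb the matching two factors of the rank-one term,
and its single variable absorbs the third.
-/

open Finset

/-- A slice term is a function of three variables that factors as a
function of two of the variables times a function of the remaining one. -/
def IsSliceTerm {X Y Z 𝔽 : Type*} [Field 𝔽] (t : X → Y → Z → 𝔽) : Prop :=
  (∃ (f : X → Y → 𝔽) (g : Z → 𝔽), ∀ x y z, t x y z = f x y * g z) ∨
  (∃ (f : X → Z → 𝔽) (g : Y → 𝔽), ∀ x y z, t x y z = f x z * g y) ∨
  (∃ (f : Y → Z → 𝔽) (g : X → 𝔽), ∀ x y z, t x y z = f y z * g x)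

/-- The slice rank of a function `X × Y × Z → 𝔽`: the least number of slice
terms needed to express it. -/
noncomputable def sliceRank {X Y Z 𝔽 : Type*} [Field 𝔽] (T : X → Y → Z → 𝔽) : ℕ :=
  sInf {k | ∃ t : Fin k → X → Y → Z → 𝔽,
    (∀ i, IsSliceTerm (t i)) ∧ ∀ x y z, T x y z = ∑ i, t i x y z}

/-- The tensor rank of a function `X × Y × Z → 𝔽`. -/
noncomputable def tensorRank {X Y Z 𝔽 : Type*} [Field 𝔽] (T : X → Y → Z → 𝔽) : ℕ :=
  sInf {k | ∃ (f : Fin k → X → 𝔽) (g : Fin k → Y → 𝔽) (h : Fin k → Z → 𝔽),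
    ∀ x y z, T x y z = ∑ i, f i x * g i y * h i z}

/-- The triangle rank of a function `X × Y × Z → 𝔽`. -/
noncomputable def triangleRank {X Y Z 𝔽 : Type*} [Field 𝔽] (T : X → Y → Z → 𝔽) : ℕ :=
  sInf {k | ∃ (f : Fin k → X → 𝔽) (g : Fin k → Y → 𝔽) (h : Fin k → Z → 𝔽)
      (r : Fin k → Fin k → Fin k → 𝔽),
    ∀ x y z, T x y z = ∑ a : Fin k, ∑ b : Fin k, ∑ c : Fin k,
      if (a : ℕ) + (b : ℕ) + (c : ℕ) < k then r a b c * f a x * g b y * h c z else 0}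

section

variable {X Y Z 𝔽 : Type*} [Field 𝔽]

def HasSliceDecomposition (T : X → Y → Z → 𝔽) (ι : Type*) [Fintype ι] : Prop :=
  ∃ t : ι → X → Y → Z → 𝔽, (∀ i, IsSliceTerm (t i)) ∧ ∀ x y z, T x y z = ∑ i, t i x y z

def HasTensorDecomposition (T : X → Y → Z → 𝔽) (ι : Type*) [Fintype ι] : Prop :=
  ∃ (f : ι → X → 𝔽) (g : ι → Y → 𝔽) (h : ι → Z → 𝔽),
    ∀ x y z, T x y z = ∑ i, f i x * g i y * h i z

variable {T : X → Y → Z → 𝔽} {ι κ : Type*} [Fintype ι] [Fintype κ]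

theorem HasSliceDecomposition.of_equiv (hT : HasSliceDecomposition T ι) (e : ι ≃ κ) :
    HasSliceDecomposition T κ := by
  obtain ⟨t, ht, hsum⟩ := hT
  exact ⟨fun k => t (e.symm k), fun k => ht _, fun x y z => by
    rw [hsum, ← e.symm.sum_comp (fun i => t i x y z)]⟩

theorem HasTensorDecomposition.of_equiv (hT : HasTensorDecomposition T ι) (e : ι ≃ κ) :
    HasTensorDecomposition T κ := by
  obtain ⟨f, g, h, hsum⟩ := hT
  exact ⟨fun k => f (e.symm k), fun k => g (e.symm k), fun k => h (e.symm k), fun x y z => by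
    rw [hsum, ← e.symm.sum_comp (fun i => f i x * g i y * h i z)]⟩

theorem sliceRank_le_card (hT : HasSliceDecomposition T ι) : sliceRank T ≤ Fintype.card ι :=
  Nat.sInf_le (hT.of_equiv (Fintype.equivFin ι))

theorem hasSliceDecomposition_sliceRank (hT : HasSliceDecomposition T ι) :
    HasSliceDecomposition T (Fin (sliceRank T)) :=
  Nat.sInf_mem (s := {k | HasSliceDecomposition T (Fin k)}) ⟨_, hT.of_equiv (Fintype.equivFin ι)⟩

theorem hasTensorDecomposition_tensorRank (hT : HasTensorDecomposition T ι) :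
    HasTensorDecomposition T (Fin (tensorRank T)) :=
  Nat.sInf_mem (s := {k | HasTensorDecomposition T (Fin k)}) ⟨_, hT.of_equiv (Fintype.equivFin ι)⟩

theorem hasSliceDecomposition_of_fintype [Fintype X] (T : X → Y → Z → 𝔽) :
    HasSliceDecomposition T X := by
  classical
  refine ⟨fun a x y z => if x = a then T a y z else 0, fun a => ?_, fun x y z => ?_⟩
  · exact Or.inr <| Or.inr ⟨fun y z => T a y z, fun x => if x = a then 1 else 0,
      fun x y z => by simp only [mul_ite, mul_one, mul_zero]⟩
  · simp

theorem hasTensorDecomposition_of_fintype [Fintype X] [Fintype Y] (T : X → Y → Z → 𝔽) :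
    HasTensorDecomposition T (X × Y) := by
  classical
  refine ⟨fun p x => if x = p.1 then 1 else 0, fun p y => if y = p.2 then 1 else 0,
    fun p z => T p.1 p.2 z, fun x y z => ?_⟩
  simp [Fintype.sum_prod_type, ite_mul]

variable {X' Y' Z' X'' Y'' Z'' : Type*}

theorem IsSliceTerm.mul_rankOne {t : X' → Y' → Z' → 𝔽} (ht : IsSliceTerm t)
    (a : X'' → 𝔽) (b : Y'' → 𝔽) (c : Z'' → 𝔽) :
    IsSliceTerm fun (x : X' × X'') (y : Y' × Y'') (z : Z' × Z'') =>
      t x.1 y.1 z.1 * (a x.2 * b y.2 * c z.2) := by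
  rcases ht with ⟨f, g, hfg⟩ | ⟨f, g, hfg⟩ | ⟨f, g, hfg⟩
  · exact Or.inl ⟨fun x y => f x.1 y.1 * (a x.2 * b y.2), fun z => g z.1 * c z.2,
      fun x y z => by simp only [hfg]; ring⟩
  · exact Or.inr <| Or.inl ⟨fun x z => f x.1 z.1 * (a x.2 * c z.2), fun y => g y.1 * b y.2,
      fun x y z => by simp only [hfg]; ring⟩
  · exact Or.inr <| Or.inr ⟨fun y z => f y.1 z.1 * (b y.2 * c z.2), fun x => g x.1 * a x.2,
      fun x y z => by simp only [hfg]; ring⟩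

theorem HasSliceDecomposition.tensorProd {ι κ : Type*} [Fintype ι] [Fintype κ]
    {F : X' → Y' → Z' → 𝔽} {G : X'' → Y'' → Z'' → 𝔽}
    (hF : HasSliceDecomposition F ι) (hG : HasTensorDecomposition G κ) :
    HasSliceDecomposition (fun (x : X' × X'') (y : Y' × Y'') (z : Z' × Z'') =>
      F x.1 y.1 z.1 * G x.2 y.2 z.2) (ι × κ) := by
  obtain ⟨t, ht, hF⟩ := hF
  obtain ⟨a, b, c, hG⟩ := hG
  refine ⟨fun p x y z => t p.1 x.1 y.1 z.1 * (a p.2 x.2 * b p.2 y.2 * c p.2 z.2),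
    fun p => (ht p.1).mul_rankOne _ _ _, fun x y z => ?_⟩
  simp only [hF, hG, Finset.sum_mul_sum, Fintype.sum_prod_type]

end

theorem sliceRank_tensorProd_le_sliceRank_mul_tensorRank_general
    {X' Y' Z' X'' Y'' Z'' 𝔽 : Type*}
    [Fintype X'] [Fintype X''] [Fintype Y'']
    [Field 𝔽] (F : X' → Y' → Z' → 𝔽) (G : X'' → Y'' → Z'' → 𝔽) :
    sliceRank (fun (x : X' × X'') (y : Y' × Y'') (z : Z' × Z'') =>
        F x.1 y.1 z.1 * G x.2 y.2 z.2) ≤ sliceRank F * tensorRank G := by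
  have hF := hasSliceDecomposition_sliceRank (hasSliceDecomposition_of_fintype F)
  have hG := hasTensorDecomposition_tensorRank (hasTensorDecomposition_of_fintype G)
  simpa using sliceRank_le_card (hF.tensorProd hG)

/-- `slicerank (F ⊗ G) ≤ slicerank F · tensorrank G`. -/
theorem sliceRank_tensorProd_le_sliceRank_mul_tensorRank
    {X' Y' Z' X'' Y'' Z'' 𝔽 : Type*}
    [Fintype X'] [Fintype Y'] [Fintype Z'] [Fintype X''] [Fintype Y''] [Fintype Z'']
    [Field 𝔽] (F : X' → Y' → Z' → 𝔽) (G : X'' → Y'' → Z'' → 𝔽) :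
    sliceRank (fun (x : X' × X'') (y : Y' × Y'') (z : Z' × Z'') =>
        F x.1 y.1 z.1 * G x.2 y.2 z.2) ≤ sliceRank F * tensorRank G :=
  sliceRank_tensorProd_le_sliceRank_mul_tensorRank_general F G
end

section
/- If F : X × X × X → F is a diagonal function (its support is {(x, σ(x), τ(x)) : x ∈ X} for bijections σ, τ of X, with all values on the support nonzero), then slicerank(F) = |X|. -/
open Finset

/-!
Write `F` as a sum of `k` slice terms and contract the first coordinate against a vector `h`,
obtaining the matrix `M_h (y, z) = ∑ₓ h x * F x y z`. Each term `f(x,y) g(z)` or `f(x,z) g(y)`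
contributes a matrix of rank at most one, and each of the `c` terms `f(y,z) g(x)` contributes
nothing as soon as `h ⊥ g`. These `c` orthogonality conditions cut out a subspace of dimension
at least `|X| - c`, and any subspace of `𝔽^X` contains a vector whose support is at least as
large as its dimension. For a diagonal `F` the matrix `M_h` is a permuted diagonal matrix of
rank `|supp h|`, so `|X| - c ≤ |supp h| = rank M_h ≤ k - c`. Conversely, splitting off the first
coordinate writes any `F` as a sum of `|X|` slice terms `[x = a] F(a, y, z)`.
-/

open Module

namespace Matrix

variable {m n K : Type*} [Fintype n] [Field K]

theorem rank_add_le (A B : Matrix m n K) : (A + B).rank ≤ A.rank + B.rank := by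
  have hrange : LinearMap.range (A + B).mulVecLin ≤
      LinearMap.range A.mulVecLin ⊔ LinearMap.range B.mulVecLin := by
    rw [mulVecLin_add]
    exact LinearMap.range_add_le _ _
  exact (Submodule.finrank_mono hrange).trans (Submodule.finrank_add_le_finrank_add_finrank _ _)

theorem rank_finsetSum_le {ι : Type*} (s : Finset ι) (A : ι → Matrix m n K) :
    (∑ i ∈ s, A i).rank ≤ ∑ i ∈ s, (A i).rank :=
  Finset.sum_hom_rel (r := fun B k => rank B ≤ k) rank_zero.le fun _ _ _ h =>
    (rank_add_le _ _).trans (by gcongr)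

end Matrix

theorem Submodule.exists_finrank_le_card_support {ι K : Type*} [Fintype ι] [Field K]
    [DecidableEq K] (W : Submodule K (ι → K)) :
    ∃ h ∈ W, finrank K W ≤ #{i | h i ≠ 0} := by
  classical
  obtain ⟨_, ⟨h, hW, rfl⟩, hmax⟩ := Set.exists_max_image
    ((fun w : ι → K => ({i | w i ≠ 0} : Finset ι)) '' W) Finset.card (Set.toFinite _)
    ⟨_, 0, W.zero_mem, rfl⟩
  set A : Finset ι := {i | h i ≠ 0}
  refine ⟨h, hW, ?_⟩
  -- a vector of `W` vanishing on the support of `h` would enlarge it, so `W` embeds into `A → K`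
  have hinj : Function.Injective ((LinearMap.funLeft K K ((↑) : A → ι)).comp W.subtype) := by
    rw [← LinearMap.ker_eq_bot, LinearMap.ker_eq_bot']
    rintro ⟨w, hwW⟩ hw
    have hwA : ∀ i, h i ≠ 0 → w i = 0 := fun i hi =>
      congrFun hw ⟨i, by simpa [A] using hi⟩
    set B : Finset ι := {i | w i ≠ 0}
    have hsupp : ({i | (h + w) i ≠ 0} : Finset ι) = A ∪ B := by
      ext i
      by_cases hi : h i = 0 <;> simp [A, B, hi, hwA i]
    have hdisj : Disjoint A B := disjoint_filter.mpr fun i _ hi => not_not.mpr (hwA i hi)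
    have hle : #({i | (h + w) i ≠ 0} : Finset ι) ≤ #A := hmax _ ⟨h + w, W.add_mem hW hwW, rfl⟩
    rw [hsupp, card_union_of_disjoint hdisj] at hle
    ext i
    by_contra hi
    have : 0 < #B := card_pos.mpr ⟨i, by simpa [B] using hi⟩
    omega
  simpa using LinearMap.finrank_le_finrank_of_injective hinj

section Contraction

variable {X Y Z 𝔽 : Type*} [Fintype X] [Field 𝔽]

def contractFst (h : X → 𝔽) (T : X → Y → Z → 𝔽) : Matrix Y Z 𝔽 :=
  Matrix.of fun y z => ∑ x, h x * T x y z

theorem contractFst_finsetSum {ι : Type*} (s : Finset ι) (h : X → 𝔽) (t : ι → X → Y → Z → 𝔽) :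
    contractFst h (fun x y z => ∑ i ∈ s, t i x y z) = ∑ i ∈ s, contractFst h (t i) := by
  ext y z
  simp only [contractFst, Matrix.of_apply, Matrix.sum_apply, Finset.mul_sum]
  exact Finset.sum_comm

theorem IsSliceTerm.rank_contractFst_le_one_or [Fintype Z] {t : X → Y → Z → 𝔽}
    (ht : IsSliceTerm t) :
    (∀ h, (contractFst h t).rank ≤ 1) ∨ ∃ g : X → 𝔽, ∀ h, g ⬝ᵥ h = 0 → contractFst h t = 0 := by
  rcases ht with ⟨f, g, hfg⟩ | ⟨f, g, hfg⟩ | ⟨f, g, hfg⟩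
  · refine Or.inl fun h => ?_
    have : contractFst h t = Matrix.vecMulVec (fun y => ∑ x, h x * f x y) g := by
      ext y z
      simp [contractFst, Matrix.vecMulVec_apply, hfg, Finset.sum_mul, mul_assoc]
    exact this ▸ Matrix.rank_vecMulVec_le _ _
  · refine Or.inl fun h => ?_
    have : contractFst h t = Matrix.vecMulVec g (fun z => ∑ x, h x * f x z) := by
      ext y z
      simp only [contractFst, Matrix.of_apply, Matrix.vecMulVec_apply, hfg, Finset.mul_sum]
      exact Finset.sum_congr rfl fun x _ => by ring
    exact this ▸ Matrix.rank_vecMulVec_le _ _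
  · refine Or.inr ⟨g, fun h hgh => ?_⟩
    ext y z
    calc ∑ x, h x * t x y z = f y z * (g ⬝ᵥ h) := by
          simp only [hfg, dotProduct, Finset.mul_sum]
          exact Finset.sum_congr rfl fun x _ => by ring
      _ = 0 := by rw [hgh, mul_zero]

theorem card_add_rank_contractFst_le {ι : Type*} [Fintype Z] [Fintype ι] [DecidableEq 𝔽]
    {T : X → Y → Z → 𝔽} (t : ι → X → Y → Z → 𝔽)
    (ht : ∀ i, IsSliceTerm (t i)) (hT : ∀ x y z, T x y z = ∑ i, t i x y z) :
    ∃ h : X → 𝔽, Fintype.card X + (contractFst h T).rank ≤ #{x | h x ≠ 0} + Fintype.card ι := by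
  classical
  set C : Finset ι := {i | ¬ ∀ h, (contractFst h (t i)).rank ≤ 1}
  have hC : ∀ i : C, ∃ g : X → 𝔽, ∀ h, g ⬝ᵥ h = 0 → contractFst h (t i) = 0 := fun i =>
    (ht i).rank_contractFst_le_one_or.resolve_left (mem_filter.mp i.2).2
  choose g hg using hC
  have hW : Fintype.card X ≤ finrank 𝔽 (LinearMap.ker (Matrix.of g).mulVecLin) + #C := by
    have hrank_nullity := LinearMap.finrank_range_add_finrank_ker (Matrix.of g).mulVecLin
    have hrank_le := (Matrix.of g).rank_le_card_height
    rw [finrank_fintype_fun_eq_card] at hrank_nullity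
    rw [Matrix.rank, Fintype.card_coe] at hrank_le
    omega
  obtain ⟨h, hhW, hh⟩ := (LinearMap.ker (Matrix.of g).mulVecLin).exists_finrank_le_card_support
  refine ⟨h, ?_⟩
  have hT' : contractFst h T = ∑ i ∈ Cᶜ, contractFst h (t i) := by
    have hCh : ∀ i (hi : i ∈ C), contractFst h (t i) = 0 := fun i hi =>
      hg ⟨i, hi⟩ h (congrFun (LinearMap.mem_ker.mp hhW) ⟨i, hi⟩)
    rw [show T = fun x y z => ∑ i, t i x y z from funext₃ hT, contractFst_finsetSum,
      ← sum_compl_add_sum C, sum_eq_zero hCh, add_zero]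
  have hrank : (contractFst h T).rank ≤ #Cᶜ := by
    rw [hT']
    refine (Matrix.rank_finsetSum_le _ _).trans ?_
    simpa using sum_le_card_nsmul Cᶜ (fun i => (contractFst h (t i)).rank) 1 fun i hi =>
      (by simpa [C] using hi : ∀ h', (contractFst h' (t i)).rank ≤ 1) h
  rw [card_compl] at hrank
  have := card_le_univ C
  omega

theorem rank_contractFst_of_diagonal [Fintype Z] [DecidableEq 𝔽] {F : X → Y → Z → 𝔽} (σ : X ≃ Y) (τ : X ≃ Z)
    (hF : ∀ x y z, F x y z ≠ 0 ↔ (y = σ x ∧ z = τ x)) (h : X → 𝔽) :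
    (contractFst h F).rank = #{x | h x ≠ 0} := by
  classical
  have hdiag : (contractFst h F).submatrix σ τ =
      Matrix.diagonal fun x => h x * F x (σ x) (τ x) := by
    ext x x'
    have hentry : (contractFst h F).submatrix σ τ x x' = h x * F x (σ x) (τ x') :=
      Fintype.sum_eq_single x fun x'' hx'' => by
        rw [show F x'' (σ x) (τ x') = 0 from
          not_ne_iff.mp fun hne => hx'' (σ.injective ((hF _ _ _).mp hne).1).symm, mul_zero]
    rw [hentry, Matrix.diagonal_apply]
    split_ifs with hxx
    · rw [hxx]
    · rw [show F x (σ x) (τ x') = 0 from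
        not_ne_iff.mp fun hne => hxx (τ.injective ((hF _ _ _).mp hne).2).symm, mul_zero]
  rw [← Matrix.rank_submatrix _ σ τ, hdiag, Matrix.rank_diagonal, Fintype.card_subtype]
  congr 1
  exact filter_congr fun x _ => by simp [(hF x _ _).mpr ⟨rfl, rfl⟩]

end Contraction

theorem exists_sliceTerms_card_fst {X Y Z 𝔽 : Type*} [Fintype X] [Field 𝔽]
    (T : X → Y → Z → 𝔽) :
    ∃ t : Fin (Fintype.card X) → X → Y → Z → 𝔽,
      (∀ i, IsSliceTerm (t i)) ∧ ∀ x y z, T x y z = ∑ i, t i x y z := by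
  classical
  let e := (Fintype.equivFin X).symm
  refine ⟨fun i x y z => T (e i) y z * if x = e i then 1 else 0,
    fun i => Or.inr (Or.inr ⟨_, _, fun _ _ _ => rfl⟩), fun x y z => ?_⟩
  rw [e.sum_comp fun a => T a y z * if x = a then 1 else 0]
  simp

/-- If `F : X × X × X → 𝔽` is a diagonal (its support is
`{(x, σ x, τ x) : x ∈ X}` for bijections `σ, τ` of `X`, with all values on the
support nonzero), then `slicerank F = |X|`. -/
theorem sliceRank_of_diagonal {X 𝔽 : Type*} [Fintype X] [Field 𝔽]
    (F : X → X → X → 𝔽) (σ τ : Equiv.Perm X)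
    (hsupp : ∀ x y z, F x y z ≠ 0 ↔ (y = σ x ∧ z = τ x)) :
    sliceRank F = Fintype.card X := by
  classical
  have hdec := exists_sliceTerms_card_fst F
  refine le_antisymm (Nat.sInf_le hdec) (le_csInf ⟨_, hdec⟩ ?_)
  rintro k ⟨t, ht, hF⟩
  obtain ⟨h, hh⟩ := card_add_rank_contractFst_le t ht hF
  rw [rank_contractFst_of_diagonal σ τ hsupp, Fintype.card_fin] at hh
  omega
end

section
/- Let q = p^r be a prime power. For 0 ≤ k < q and natural numbers m, m' with m ≡ m' (mod q), one has binomial(m, k) ≡ binomial(m', k) (mod p). -/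
/-!
By Lucas' theorem, for `k < p ^ r` the residue of `C(n, k)` modulo `p` depends only on the
last `r` base-`p` digits of `n`, that is, on `n % p ^ r`.
-/

open Finset

theorem Nat.mod_pow_div_pow_mod (p n : ℕ) {i r : ℕ} (hi : i < r) :
    n % p ^ r / p ^ i % p = n / p ^ i % p := by
  rw [← Nat.mod_mul_right_div_self, ← Nat.mod_mul_right_div_self, ← pow_succ,
    Nat.mod_mod_of_dvd _ (pow_dvd_pow p hi)]

theorem Choose.choose_modEq_choose_mod_pow {p n k r : ℕ} [Fact p.Prime] (hk : k < p ^ r) :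
    n.choose k ≡ (n % p ^ r).choose k [MOD p] := by
  rw [← Int.natCast_modEq_iff]
  have hn : n % p ^ r < p ^ r := Nat.mod_lt n (pow_pos (Fact.out : p.Prime).pos r)
  have hdigits : ∏ i ∈ range r, (n / p ^ i % p).choose (k / p ^ i % p) =
      ∏ i ∈ range r, (n % p ^ r / p ^ i % p).choose (k / p ^ i % p) :=
    prod_congr rfl fun i hi => by rw [Nat.mod_pow_div_pow_mod p n (mem_range.mp hi)]
  calc (n.choose k : ℤ)
      ≡ (n / p ^ r).choose (k / p ^ r) * ∏ i ∈ range r, (n / p ^ i % p).choose (k / p ^ i % p)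
        [ZMOD p] := Choose.choose_modEq_choose_mul_prod_range_choose r
    _ = ∏ i ∈ range r, ((n % p ^ r / p ^ i % p).choose (k / p ^ i % p) : ℤ) := by
        rw [Nat.div_eq_of_lt hk, Nat.choose_zero_right, hdigits]; push_cast; ring
    _ ≡ (n % p ^ r).choose k [ZMOD p] :=
        (Choose.choose_modEq_prod_range_choose hn hk).symm

/-- Let `q = p^r` be a prime power. For `0 ≤ k < q` and natural numbers
`m, m'` with `m ≡ m' (mod q)`, one has `C(m,k) ≡ C(m',k) (mod p)`. -/
theorem choose_modEq_of_modEq_prime_pow (p r q k m m' : ℕ) (hp : p.Prime)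
    (hq : q = p ^ r) (hk : k < q) (hmm : m ≡ m' [MOD q]) :
    Nat.choose m k ≡ Nat.choose m' k [MOD p] := by
  subst hq
  have : Fact p.Prime := ⟨hp⟩
  calc m.choose k ≡ (m % p ^ r).choose k [MOD p] := Choose.choose_modEq_choose_mod_pow hk
    _ = (m' % p ^ r).choose k := by rw [hmm]
    _ ≡ m'.choose k [MOD p] := (Choose.choose_modEq_choose_mod_pow hk).symm
end

section
/- Let q = p^r be a prime power and let D : (Z/qZ)^3 → F_p be given by D(x,y,z) = 1 if x + y + z = 0 in Z/qZ and 0 otherwise. Then the triangle rank of D over F_p is at most q. Concretely, D(x, y, z+1) = Σ_{a+b+c = q−1} C(x,a) C(y,b) C(z,c) in F_p, where C(·,k) : Z/qZ → F_p denotes the well-defined reduction of the binomial coefficient function m ↦ binomial(m,k). -/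
/-!
For representatives `0 ≤ x, y, z < q`, Vandermonde's identity turns
`Σ_{a+b+c=q-1} C(x,a) C(y,b) C(z,c)` into `C(x + y + z, q - 1)`, and Lucas' theorem, applied one base-`p` digit at a time, shows that
`C(N, p ^ r - 1) ≡ 1 (mod p)` when every digit of `N` below `p ^ r` equals `p - 1`, i.e.
when `p ^ r ∣ N + 1`, and `≡ 0` otherwise. Substituting `z - 1` for `z` writes `D` as a sum of
products `f_a(x) g_b(y) h_c(z)` over `a + b + c = q - 1 < q`, which bounds its triangle rank
by `q`.
-/

open Finset

namespace Nat

theorem mod_choose_sub_one {p : ℕ} (hp : 0 < p) (N : ℕ) :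
    (N % p).choose (p - 1) = if p ∣ N + 1 then 1 else 0 := by
  have hlt := N.mod_lt hp
  have hdvd : p ∣ N + 1 ↔ N % p + 1 = p := by
    have hN : N + 1 = p * (N / p) + (N % p + 1) := by have := Nat.div_add_mod N p; omega
    rw [hN, Nat.dvd_add_right (dvd_mul_right _ _)]
    exact ⟨fun h => le_antisymm (by omega) (Nat.le_of_dvd (by omega) h), fun h => by rw [h]⟩
  split_ifs with h
  · rw [show N % p = p - 1 by omega, Nat.choose_self]
  · exact Nat.choose_eq_zero_of_lt (by omega)

theorem cast_choose_prime_pow_sub_one (p : ℕ) [Fact p.Prime] (r N : ℕ) :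
    (N.choose (p ^ r - 1) : ZMod p) = if p ^ r ∣ N + 1 then 1 else 0 := by
  induction r generalizing N with
  | zero => simp
  | succ r ih =>
    have hp := (Fact.out : p.Prime).pos
    have hpr : 0 < p ^ r := pow_pos hp r
    have hk : p ^ (r + 1) - 1 = p * (p ^ r - 1) + (p - 1) := by
      rw [pow_succ', Nat.mul_sub_one]
      have := Nat.le_mul_of_pos_right p hpr
      omega
    have hdvd : p ^ (r + 1) ∣ N + 1 ↔ p ∣ N + 1 ∧ p ^ r ∣ N / p + 1 := by
      refine ⟨fun h => ?_, fun ⟨h₁, h₂⟩ => ?_⟩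
      · have h₁ : p ∣ N + 1 := (dvd_pow_self p r.succ_ne_zero).trans h
        refine ⟨h₁, ?_⟩
        rwa [← Nat.succ_div_of_dvd h₁, Nat.dvd_div_iff_mul_dvd h₁, ← pow_succ']
      · rwa [← Nat.succ_div_of_dvd h₁, Nat.dvd_div_iff_mul_dvd h₁, ← pow_succ'] at h₂
    have hmod : (p ^ (r + 1) - 1) % p = p - 1 := by
      rw [hk, Nat.mul_add_mod, Nat.mod_eq_of_lt (by omega)]
    have hdiv : (p ^ (r + 1) - 1) / p = p ^ r - 1 := by
      rw [hk, Nat.mul_add_div hp, Nat.div_eq_of_lt (by omega), add_zero]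
    have hlucas := (ZMod.natCast_eq_natCast_iff _ _ _).2
      (Choose.choose_modEq_choose_mod_mul_choose_div_nat (p := p) (n := N) (k := p ^ (r + 1) - 1))
    rw [hlucas, hmod, hdiv, Nat.cast_mul, mod_choose_sub_one hp, ih, Nat.cast_ite, Nat.cast_one,
      Nat.cast_zero, ite_zero_mul_ite_zero, mul_one]
    exact if_congr hdvd.symm rfl rfl

theorem add_add_choose_eq (l m n k : ℕ) :
    (l + m + n).choose k = ∑ ij ∈ antidiagonal k, ∑ jk ∈ antidiagonal ij.2,
      l.choose ij.1 * m.choose jk.1 * n.choose jk.2 := by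
  simp_rw [add_assoc, Nat.add_choose_eq, Finset.mul_sum, mul_assoc]

end Nat

theorem ite_add_add_add_one_eq_zero_eq_sum_choose (p r : ℕ) [Fact p.Prime]
    (x y z : ZMod (p ^ r)) :
    (if x + y + (z + 1) = 0 then (1 : ZMod p) else 0) =
      ∑ ab ∈ antidiagonal (p ^ r - 1), ∑ bc ∈ antidiagonal ab.2,
        ((x.val.choose ab.1 : ZMod p) * (y.val.choose bc.1 : ZMod p) *
          (z.val.choose bc.2 : ZMod p)) := by
  have hsum : ((x.val + y.val + z.val + 1 : ℕ) : ZMod (p ^ r)) = x + y + (z + 1) := by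
    push_cast
    simp only [ZMod.natCast_val, ZMod.cast_id', id, add_assoc]
  simp_rw [← Nat.cast_mul, ← Nat.cast_sum, ← Nat.add_add_choose_eq,
    Nat.cast_choose_prime_pow_sub_one, ← ZMod.natCast_eq_zero_iff, hsum]

theorem Finset.Nat.sum_antidiagonal_antidiagonal_eq_sum_range {M : Type*} [AddCommMonoid M]
    (n : ℕ) (F : ℕ → ℕ → ℕ → M) :
    ∑ ij ∈ antidiagonal n, ∑ jk ∈ antidiagonal ij.2, F ij.1 jk.1 jk.2 =
      ∑ a ∈ range (n + 1), ∑ b ∈ range (n + 1), ∑ c ∈ range (n + 1),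
        if a + b + c = n then F a b c else 0 := by
  calc _ = ∑ t ∈ (antidiagonal n).sigma fun ij => antidiagonal ij.2, F t.1.1 t.2.1 t.2.2 :=
        (sum_sigma _ _ _).symm
    _ = ∑ t ∈ {t ∈ range (n + 1) ×ˢ range (n + 1) ×ˢ range (n + 1) | t.1 + t.2.1 + t.2.2 = n},
          F t.1 t.2.1 t.2.2 := by
      refine sum_nbij' (fun t => (t.1.1, t.2.1, t.2.2)) (fun t => ⟨(t.1, t.2.1 + t.2.2), t.2⟩)
        ?_ ?_ ?_ (fun _ _ => rfl) (fun _ _ => rfl)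
      · rintro ⟨⟨a, k⟩, b, c⟩ h
        simp only [mem_sigma, HasAntidiagonal.mem_antidiagonal] at h
        simp only [mem_filter, mem_product, mem_range]
        omega
      · rintro ⟨a, b, c⟩ h
        simp only [mem_filter, mem_product, mem_range] at h
        simp only [mem_sigma, HasAntidiagonal.mem_antidiagonal, and_true]
        omega
      · rintro ⟨⟨a, k⟩, b, c⟩ h
        simp only [mem_sigma, HasAntidiagonal.mem_antidiagonal] at h
        obtain rfl := h.2
        rfl
    _ = _ := by simp only [sum_filter, sum_product]

theorem triangleRank_le_of_eq_sum_antidiagonal {X Y Z 𝔽 : Type*} [Field 𝔽]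
    {T : X → Y → Z → 𝔽} (n : ℕ) (f : ℕ → X → 𝔽) (g : ℕ → Y → 𝔽) (h : ℕ → Z → 𝔽)
    (hT : ∀ x y z, T x y z = ∑ ij ∈ antidiagonal n, ∑ jk ∈ antidiagonal ij.2,
      f ij.1 x * g jk.1 y * h jk.2 z) :
    triangleRank T ≤ n + 1 := by
  refine Nat.sInf_le ⟨fun a => f a, fun b => g b, fun c => h c,
    fun a b c => if (a : ℕ) + b + c = n then 1 else 0, fun x y z => ?_⟩
  rw [hT, Finset.Nat.sum_antidiagonal_antidiagonal_eq_sum_range n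
    fun a b c => f a x * g b y * h c z]
  simp only [← Fin.sum_univ_eq_sum_range]
  refine sum_congr rfl fun a _ => sum_congr rfl fun b _ => sum_congr rfl fun c _ => ?_
  split_ifs <;> first | omega | ring

theorem triangleRank_D_ZMod_prime_pow_general (p r q : ℕ) [Fact p.Prime]
    (hq : q = p ^ r) :
    (∀ x y z : ZMod q,
        (if x + y + (z + 1) = 0 then (1 : ZMod p) else 0) =
          ∑ ab ∈ Finset.HasAntidiagonal.antidiagonal (q - 1), ∑ bc ∈ Finset.HasAntidiagonal.antidiagonal ab.2,
            ((x.val.choose ab.1 : ZMod p) * (y.val.choose bc.1 : ZMod p) *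
              (z.val.choose bc.2 : ZMod p))) ∧
    triangleRank (fun x y z : ZMod q => if x + y + z = 0 then (1 : ZMod p) else 0) ≤ q := by
  subst hq
  have hpred : p ^ r - 1 + 1 = p ^ r := Nat.sub_add_cancel (pow_pos (Fact.out : p.Prime).pos r)
  refine ⟨ite_add_add_add_one_eq_zero_eq_sum_choose p r, ?_⟩
  refine (triangleRank_le_of_eq_sum_antidiagonal (p ^ r - 1)
    (fun a x => (x.val.choose a : ZMod p)) (fun b y => y.val.choose b)
    (fun c z => (z - 1).val.choose c) fun x y z => ?_).trans_eq hpred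
  simpa using ite_add_add_add_one_eq_zero_eq_sum_choose p r x y (z - 1)

/-- Let `q = p^r` be a prime power and `D : (ℤ/qℤ)³ → 𝔽_p` the indicator of
`x + y + z = 0`. Then the triangle rank of `D` over `𝔽_p` is at most `q`.
Concretely, `D (x, y, z+1) = Σ_{a+b+c=q-1} C(x,a) C(y,b) C(z,c)` in `𝔽_p`,
where `C (·, k) : ℤ/qℤ → 𝔽_p` is the reduction of `m ↦ binomial (m, k)`
(well defined by Lucas' theorem). -/
theorem triangleRank_D_ZMod_prime_pow (p r q : ℕ) [Fact p.Prime]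
    (hq : q = p ^ r) (hr : 1 ≤ r) :
    (∀ x y z : ZMod q,
        (if x + y + (z + 1) = 0 then (1 : ZMod p) else 0) =
          ∑ ab ∈ Finset.HasAntidiagonal.antidiagonal (q - 1), ∑ bc ∈ Finset.HasAntidiagonal.antidiagonal ab.2,
            ((x.val.choose ab.1 : ZMod p) * (y.val.choose bc.1 : ZMod p) *
              (z.val.choose bc.2 : ZMod p))) ∧
    triangleRank (fun x y z : ZMod q => if x + y + z = 0 then (1 : ZMod p) else 0) ≤ q :=
  triangleRank_D_ZMod_prime_pow_general p r q hq
end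

section
/- For fixed α ∈ (0, 1/2), the quantity I(m, α) = sup_{θ<0}(αθ − log G(θ, 1/m)) is strictly positive for every m ≥ 1, where G(t,x) = (1 − e^{t(1+x)})/((1+1/x)(1 − e^{tx})). -/
/-!
Writing `1 - e^y = 2 e^{y/2} sinh (-y/2)` gives, with `v = -θx/2`,
`G(θ, x) = e^{θ/2} sinh ((1 + 1/x) v) / ((1 + 1/x) sinh v)`, and `sinh u ≤ u cosh u`, `v ≤ sinh v`
bound the quotient by `cosh (θ(1+x)/2) ≤ exp (θ²(1+x)²/8)`. Hence
`log G(θ, x) ≤ θ/2 + θ²(1+x)²/8`, so `αθ - log G(θ, x) > 0` for small `θ < 0` as soon as `α < 1/2`.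
The lower bound `G ≥ (1 + 1/x)⁻¹` keeps the set bounded above when `α ≥ 0`.
-/

open Real

theorem Real.sinh_le_mul_cosh {x : ℝ} (hx : 0 ≤ x) : sinh x ≤ x * cosh x := by
  have h := (convex_Icc 0 x).image_sub_le_mul_sub_of_deriv_le continuous_sinh.continuousOn
    differentiable_sinh.differentiableOn (C := cosh x) (fun z hz => by
      rw [interior_Icc] at hz
      rw [Real.deriv_sinh, cosh_le_cosh, abs_of_pos hz.1, abs_of_nonneg hx]
      exact hz.2.le) 0 (by simp [hx]) x (by simp [hx]) hx
  simpa [mul_comm] using h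

theorem Real.one_sub_exp_eq (y : ℝ) : 1 - exp y = 2 * exp (y / 2) * sinh (-(y / 2)) := by
  have hinv : exp (y / 2) * exp (-(y / 2)) = 1 := by rw [← exp_add, add_neg_cancel, exp_zero]
  have hsq : exp (y / 2) * exp (y / 2) = exp y := by rw [← exp_add, add_halves]
  rw [sinh_eq, neg_neg]
  linear_combination hsq - hinv

noncomputable section

namespace InstabilityRate

def G (t x : ℝ) : ℝ := (1 - exp (t * (1 + x))) / ((1 + 1 / x) * (1 - exp (t * x)))

/-- `I(m, α)` of the paper is `rate (1 / m) α`. -/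
def rate (x α : ℝ) : ℝ := sSup {y | ∃ θ : ℝ, θ < 0 ∧ y = α * θ - log (G θ x)}

theorem G_eq (t x : ℝ) :
    G t x = exp (t / 2) * sinh (-(t * (1 + x) / 2)) / ((1 + 1 / x) * sinh (-(t * x / 2))) := by
  have hexp : exp (t * (1 + x) / 2) = exp (t / 2) * exp (t * x / 2) := by
    rw [← exp_add]; ring_nf
  rw [G, one_sub_exp_eq, one_sub_exp_eq, hexp]
  have hexp_pos := exp_pos (t * x / 2)
  field_simp

variable {x θ : ℝ}

theorem inv_one_add_inv_le_G (hx : 0 < x) (hθ : θ < 0) : (1 + 1 / x)⁻¹ ≤ G θ x := by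
  have hden : 0 < 1 - exp (θ * x) := sub_pos.2 (exp_lt_one_iff.2 (mul_neg_of_neg_of_pos hθ hx))
  have hmono : exp (θ * (1 + x)) ≤ exp (θ * x) := exp_le_exp.2 (by nlinarith)
  rw [G, inv_eq_one_div, div_le_div_iff₀ (by positivity) (by positivity), one_mul, mul_comm]
  gcongr

theorem G_pos (hx : 0 < x) (hθ : θ < 0) : 0 < G θ x :=
  (inv_pos.2 (by positivity)).trans_le (inv_one_add_inv_le_G hx hθ)

theorem G_le_exp_mul_cosh (hx : 0 < x) (hθ : θ < 0) :
    G θ x ≤ exp (θ / 2) * cosh (θ * (1 + x) / 2) := by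
  set v := -(θ * x / 2) with hv
  have hv0 : 0 < v := by nlinarith
  have hu : -(θ * (1 + x) / 2) = (1 + 1 / x) * v := by rw [hv]; field_simp; ring
  have key : sinh ((1 + 1 / x) * v) ≤ (1 + 1 / x) * sinh v * cosh ((1 + 1 / x) * v) :=
    calc sinh ((1 + 1 / x) * v) ≤ (1 + 1 / x) * v * cosh ((1 + 1 / x) * v) :=
          sinh_le_mul_cosh (by positivity)
      _ ≤ (1 + 1 / x) * sinh v * cosh ((1 + 1 / x) * v) := by
          gcongr
          exact self_le_sinh_iff.2 hv0.le
  rw [G_eq, ← cosh_neg, hu, mul_div_assoc]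
  gcongr
  rw [div_le_iff₀ (by have := sinh_pos_iff.2 hv0; positivity)]
  linarith

theorem log_G_le (hx : 0 < x) (hθ : θ < 0) : log (G θ x) ≤ θ / 2 + (θ * (1 + x)) ^ 2 / 8 := by
  calc log (G θ x) ≤ log (exp (θ / 2) * exp ((θ * (1 + x) / 2) ^ 2 / 2)) := by
        gcongr
        · exact G_pos hx hθ
        · exact (G_le_exp_mul_cosh hx hθ).trans (by gcongr; exact cosh_le_exp_half_sq _)
    _ = θ / 2 + (θ * (1 + x)) ^ 2 / 8 := by rw [← exp_add, log_exp]; ring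

theorem bddAbove_rate_set {α : ℝ} (hx : 0 < x) (hα : 0 ≤ α) :
    BddAbove {y | ∃ θ : ℝ, θ < 0 ∧ y = α * θ - log (G θ x)} := by
  refine ⟨log (1 + 1 / x), ?_⟩
  rintro y ⟨θ, hθ, rfl⟩
  have hlog := log_le_log (by positivity) (inv_one_add_inv_le_G hx hθ)
  rw [log_inv] at hlog
  nlinarith

theorem rate_pos {α : ℝ} (hx : 0 < x) (hα0 : 0 ≤ α) (hα : α < 1 / 2) : 0 < rate x α := by
  -- the maximiser of the quadratic lower bound `αθ - θ/2 - θ²(1+x)²/8`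
  set θ := -4 * (1 / 2 - α) / (1 + x) ^ 2 with hθ_def
  have hθ : θ < 0 := div_neg_of_neg_of_pos (by linarith) (by positivity)
  have hquad : α * θ - (θ / 2 + (θ * (1 + x)) ^ 2 / 8) = 2 * (1 / 2 - α) ^ 2 / (1 + x) ^ 2 := by
    rw [hθ_def]; field_simp; ring
  calc 0 < 2 * (1 / 2 - α) ^ 2 / (1 + x) ^ 2 := by positivity
    _ ≤ α * θ - log (G θ x) := by linarith [log_G_le hx hθ]
    _ ≤ rate x α := le_csSup (bddAbove_rate_set hx hα0) ⟨θ, hθ, rfl⟩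

end InstabilityRate

end

/-- For fixed `α ∈ (0, 1/2)`, the quantity
`I(m,α) = sup_{θ<0} (αθ − log G(θ, 1/m))` is strictly positive for every
`m ≥ 1`, where `G(t,x) = (1 − e^{t(1+x)})/((1+1/x)(1 − e^{tx}))`. -/
theorem instability_rate_pos (m : ℕ) (hm : 1 ≤ m) (α : ℝ)
    (hα : α ∈ Set.Ioo (0 : ℝ) (1 / 2)) :
    0 < sSup {y : ℝ | ∃ θ : ℝ, θ < 0 ∧
        y = α * θ - Real.log ((1 - Real.exp (θ * (1 + 1 / m))) /
          ((1 + 1 / (1 / (m : ℝ))) * (1 - Real.exp (θ * (1 / m)))))} :=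
  InstabilityRate.rate_pos (one_div_pos.2 (Nat.cast_pos.2 hm)) hα.1.le hα.2
end

section
/- Let F : X × Y × Z → F with |X| = |Y| = |Z| = k and triangle rank at most k. Then for all n ≥ 1, the slice rank of the n-th tensor power F^{⊗n} : X^n × Y^n × Z^n → F is at most 3 times the number of tuples a ∈ {0,…,k−1}^n with Σ_i a_i ≤ (k−1)n/3. -/
open Finset

/-!
Fix a triangle decomposition of `F` with `m ≤ k` index functions. Expanding the product,
`F^{⊗n}(x, y, z) = ∑_{a, b, c ∈ [m]^n} r(a, b, c) f_a(x) g_b(y) h_c(z)` with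
`r(a, b, c) = ∏_i r(a_i, b_i, c_i)`, and `r(a, b, c) ≠ 0` forces `a_i + b_i + c_i ≤ k - 1` for
every `i`. Summing over `i`, one of `∑ a`, `∑ b`, `∑ c` is at most `(k - 1) n / 3`, so every
nonzero term lies in the `x`-, `y`- or `z`-slice of a light tuple. Grouping the terms by such a
slice gives one slice term per light tuple and direction.
-/

theorem sum_sum_sum_eq_of_vanishing {α β γ M : Type*} [Fintype α] [Fintype β] [Fintype γ]
    [DecidableEq α] [DecidableEq β] [AddCommMonoid M]
    (A : Finset α) (B : Finset β) (C : Finset γ) (τ : α → β → γ → M)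
    (hτ : ∀ a b c, a ∉ A → b ∉ B → c ∉ C → τ a b c = 0) :
    ∑ a, ∑ b, ∑ c, τ a b c =
      ∑ a ∈ A, ∑ b, ∑ c, τ a b c + ∑ b ∈ B, ∑ a ∈ Aᶜ, ∑ c, τ a b c +
        ∑ c ∈ C, ∑ a ∈ Aᶜ, ∑ b ∈ Bᶜ, τ a b c := by
  have hC : ∀ a ∈ Aᶜ, ∀ b ∈ Bᶜ, ∑ c, τ a b c = ∑ c ∈ C, τ a b c := fun a ha b hb =>
    (sum_subset (subset_univ C) fun c _ hc => hτ a b c (mem_compl.1 ha) (mem_compl.1 hb) hc).symm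
  rw [← sum_add_sum_compl A, add_assoc]
  congr 1
  simp_rw [← sum_add_sum_compl B]
  rw [sum_add_distrib, sum_comm]
  congr 1
  rw [sum_congr rfl fun a ha => sum_congr rfl (hC a ha)]
  exact (sum_congr rfl fun _ _ => sum_comm).trans sum_comm

theorem prod_sum_sum_sum {ι α β γ R : Type*} [Fintype ι] [DecidableEq ι] [Fintype α]
    [Fintype β] [Fintype γ] [CommSemiring R] (r : α → β → γ → R) (u : ι → α → R)
    (v : ι → β → R) (w : ι → γ → R) :
    ∏ i, ∑ a, ∑ b, ∑ c, r a b c * u i a * v i b * w i c =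
      ∑ a : ι → α, ∑ b : ι → β, ∑ c : ι → γ, (∏ i, r (a i) (b i) (c i)) *
        (∏ i, u i (a i)) * (∏ i, v i (b i)) * ∏ i, w i (c i) := by
  simp only [Fintype.prod_sum, prod_mul_distrib]

theorem three_mul_sum_le_or {ι : Type*} [Fintype ι] (a b c : ι → ℕ) (d : ℕ)
    (h : ∀ i, a i + b i + c i ≤ d) :
    3 * ∑ i, a i ≤ d * Fintype.card ι ∨ 3 * ∑ i, b i ≤ d * Fintype.card ι ∨
      3 * ∑ i, c i ≤ d * Fintype.card ι := by
  have hsum := sum_le_sum fun i (_ : i ∈ univ) => h i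
  rw [sum_add_distrib, sum_add_distrib, sum_const, card_univ, smul_eq_mul, mul_comm] at hsum
  omega

theorem card_filter_pi_fin_le {ι : Type*} [Fintype ι] [DecidableEq ι] {m k : ℕ} (hmk : m ≤ k)
    (p : (ι → ℕ) → Prop) [DecidablePred p] :
    #(univ.filter fun a : ι → Fin m => p fun i => a i) ≤
      #(univ.filter fun a : ι → Fin k => p fun i => a i) :=
  card_le_card_of_injOn (fun a i => Fin.castLE hmk (a i)) (fun a ha => by simpa using ha)
    fun a _ b _ hab => funext fun i => Fin.castLE_injective hmk (congrFun hab i)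

section

variable {X Y Z 𝔽 : Type*} [Field 𝔽]

theorem sliceRank_le_card_s16 {ι : Type*} {T : X → Y → Z → 𝔽} (s : Finset ι)
    (t : ι → X → Y → Z → 𝔽) (ht : ∀ i ∈ s, IsSliceTerm (t i))
    (hT : ∀ x y z, T x y z = ∑ i ∈ s, t i x y z) :
    sliceRank T ≤ #s := by
  let e := s.equivFin
  refine Nat.sInf_le ⟨fun j => t (e.symm j), fun j => ht _ (e.symm j).2, fun x y z => ?_⟩
  rw [hT, ← sum_coe_sort, ← e.symm.sum_comp]

theorem sliceRank_le_of_support_subset {α β γ : Type*} [Fintype α] [Fintype β] [Fintype γ]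
    [DecidableEq α] [DecidableEq β]
    (r : α → β → γ → 𝔽) (u : α → X → 𝔽) (v : β → Y → 𝔽) (w : γ → Z → 𝔽)
    (A : Finset α) (B : Finset β) (C : Finset γ)
    (hr : ∀ a b c, r a b c ≠ 0 → a ∈ A ∨ b ∈ B ∨ c ∈ C) :
    sliceRank (fun x y z => ∑ a, ∑ b, ∑ c, r a b c * u a x * v b y * w c z) ≤
      #A + #B + #C := by
  let t : α ⊕ β ⊕ γ → X → Y → Z → 𝔽 := Sum.elim
    (fun a x y z => ∑ b, ∑ c, r a b c * u a x * v b y * w c z)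
    (Sum.elim (fun b x y z => ∑ a ∈ Aᶜ, ∑ c, r a b c * u a x * v b y * w c z)
      (fun c x y z => ∑ a ∈ Aᶜ, ∑ b ∈ Bᶜ, r a b c * u a x * v b y * w c z))
  have ht : ∀ i, IsSliceTerm (t i) := by
    rintro (a | b | c)
    · refine .inr (.inr ⟨fun y z => ∑ b, ∑ c, r a b c * v b y * w c z, u a, fun x y z => ?_⟩)
      simp only [t, Sum.elim_inl, sum_mul, mul_right_comm _ (u a x)]
    · refine .inr (.inl ⟨fun x z => ∑ a ∈ Aᶜ, ∑ c, r a b c * u a x * w c z, v b,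
        fun x y z => ?_⟩)
      simp only [t, Sum.elim_inl, Sum.elim_inr, sum_mul, mul_right_comm _ (v b y)]
    · exact .inl ⟨fun x y => ∑ a ∈ Aᶜ, ∑ b ∈ Bᶜ, r a b c * u a x * v b y, w c,
        fun x y z => by simp only [t, Sum.elim_inr, sum_mul]⟩
  refine (sliceRank_le_card_s16 (A.disjSum (B.disjSum C)) t (fun i _ => ht i) fun x y z => ?_).trans
    (by rw [card_disjSum, card_disjSum, add_assoc])
  have hvanish : ∀ a b c, a ∉ A → b ∉ B → c ∉ C → r a b c = 0 := fun a b c ha hb hc => by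
    by_contra h
    rcases hr a b c h with h | h | h <;> contradiction
  rw [sum_sum_sum_eq_of_vanishing A B C _ fun a b c ha hb hc => by
    rw [hvanish a b c ha hb hc, zero_mul, zero_mul, zero_mul]]
  simp only [t, sum_disjSum, Sum.elim_inl, Sum.elim_inr, add_assoc]

def HasTriangleRankAtMost (F : X → Y → Z → 𝔽) (k : ℕ) : Prop :=
  ∃ (f : Fin k → X → 𝔽) (g : Fin k → Y → 𝔽) (h : Fin k → Z → 𝔽)
      (r : Fin k → Fin k → Fin k → 𝔽),
    ∀ x y z, F x y z = ∑ a : Fin k, ∑ b : Fin k, ∑ c : Fin k,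
      if (a : ℕ) + (b : ℕ) + (c : ℕ) < k then r a b c * f a x * g b y * h c z else 0

theorem hasTriangleRankAtMost_card [Finite X] [Finite Y] [Finite Z] (F : X → Y → Z → 𝔽) :
    HasTriangleRankAtMost F (Nat.card X + Nat.card Y + Nat.card Z) := by
  set m := Nat.card X + Nat.card Y + Nat.card Z
  let eX := Finite.equivFin X
  let eY := Finite.equivFin Y
  let eZ := Finite.equivFin Z
  refine ⟨fun a x => if a = Fin.castLE (by omega) (eX x) then 1 else 0,
    fun b y => if b = Fin.castLE (by omega) (eY y) then 1 else 0,
    fun c z => if c = Fin.castLE (by omega) (eZ z) then 1 else 0,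
    fun a b c => if h : (a : ℕ) < Nat.card X ∧ (b : ℕ) < Nat.card Y ∧ (c : ℕ) < Nat.card Z then
      F (eX.symm ⟨a, h.1⟩) (eY.symm ⟨b, h.2.1⟩) (eZ.symm ⟨c, h.2.2⟩) else 0, fun x y z => ?_⟩
  have := (eX x).2
  have := (eY y).2
  have := (eZ z).2
  rw [Fintype.sum_eq_single (Fin.castLE (by omega) (eX x)) fun a ha => by simp [ha],
    Fintype.sum_eq_single (Fin.castLE (by omega) (eY y)) fun b hb => by simp [hb],
    Fintype.sum_eq_single (Fin.castLE (by omega) (eZ z)) fun c hc => by simp [hc]]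
  simp [m]
  omega

/-- `triangleRank` is an `sInf`, hence `0` when no decomposition exists; finiteness rules
that out. -/
theorem hasTriangleRankAtMost_triangleRank [Finite X] [Finite Y] [Finite Z]
    (F : X → Y → Z → 𝔽) : HasTriangleRankAtMost F (triangleRank F) :=
  Nat.sInf_mem (s := {m | HasTriangleRankAtMost F m}) ⟨_, hasTriangleRankAtMost_card F⟩

theorem sliceRank_tensorPow_le_of_hasTriangleRankAtMost {F : X → Y → Z → 𝔽} {m k : ℕ}
    (hF : HasTriangleRankAtMost F m) (hmk : m ≤ k) (n : ℕ) :
    sliceRank (fun (x : Fin n → X) (y : Fin n → Y) (z : Fin n → Z) =>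
        ∏ i, F (x i) (y i) (z i)) ≤
      3 * #(univ.filter fun a : Fin n → Fin k => 3 * ∑ i, (a i : ℕ) ≤ (k - 1) * n) := by
  obtain ⟨f, g, h, r, hFr⟩ := hF
  let ρ : Fin m → Fin m → Fin m → 𝔽 := fun a b c => if (a : ℕ) + b + c < m then r a b c else 0
  have hpow : (fun (x : Fin n → X) (y : Fin n → Y) (z : Fin n → Z) =>
      ∏ i, F (x i) (y i) (z i)) = fun x y z => ∑ a : Fin n → Fin m, ∑ b : Fin n → Fin m,
        ∑ c : Fin n → Fin m, (∏ i, ρ (a i) (b i) (c i)) * (∏ i, f (a i) (x i)) *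
          (∏ i, g (b i) (y i)) * ∏ i, h (c i) (z i) := by
    funext x y z
    refine Eq.trans ?_ (prod_sum_sum_sum ρ (fun i a => f a (x i)) (fun i b => g b (y i))
      fun i c => h c (z i))
    simp only [hFr, ρ, ite_mul, zero_mul]
  have hsupport : ∀ a b c : Fin n → Fin m, ∏ i, ρ (a i) (b i) (c i) ≠ 0 →
      ∀ i, (a i : ℕ) + b i + c i ≤ k - 1 := fun a b c hne i => by
    have := prod_ne_zero_iff.1 hne i (mem_univ i)
    simp only [ρ, ne_eq, ite_eq_right_iff, Classical.not_imp] at this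
    omega
  let A := univ.filter fun a : Fin n → Fin m => 3 * ∑ i, (a i : ℕ) ≤ (k - 1) * n
  rw [hpow]
  calc _ ≤ #A + #A + #A := sliceRank_le_of_support_subset _ _ _ _ A A A
          fun a b c hne => by
            simpa [A] using three_mul_sum_le_or _ _ _ _ (hsupport a b c hne)
    _ = 3 * #A := by ring
    _ ≤ _ := Nat.mul_le_mul_left 3 <|
      card_filter_pi_fin_le hmk fun v => 3 * ∑ i, v i ≤ (k - 1) * n

end

theorem sliceRank_tensorPow_le_general {X Y Z 𝔽 : Type*} [Fintype X] [Fintype Y]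
    [Fintype Z] [Field 𝔽] (F : X → Y → Z → 𝔽) (k n : ℕ)
    (hF : triangleRank F ≤ k) :
    sliceRank (fun (x : Fin n → X) (y : Fin n → Y) (z : Fin n → Z) =>
        ∏ i, F (x i) (y i) (z i)) ≤
      3 * (Finset.univ.filter fun a : Fin n → Fin k =>
        3 * ∑ i, (a i : ℕ) ≤ (k - 1) * n).card :=
  sliceRank_tensorPow_le_of_hasTriangleRankAtMost (hasTriangleRankAtMost_triangleRank F) hF n

/-- If `|X| = |Y| = |Z| = k` and `F` has triangle rank at most `k`, then for
all `n ≥ 1` the slice rank of `F^{⊗n}` is at most `3` times the number of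
tuples `a ∈ {0,…,k−1}^n` with `Σ_i a_i ≤ (k−1)n/3`. -/
theorem sliceRank_tensorPow_le {X Y Z 𝔽 : Type*} [Fintype X] [Fintype Y]
    [Fintype Z] [Field 𝔽] (F : X → Y → Z → 𝔽) (k n : ℕ) (hn : 1 ≤ n)
    (hX : Fintype.card X = k) (hY : Fintype.card Y = k) (hZ : Fintype.card Z = k)
    (hF : triangleRank F ≤ k) :
    sliceRank (fun (x : Fin n → X) (y : Fin n → Y) (z : Fin n → Z) =>
        ∏ i, F (x i) (y i) (z i)) ≤
      3 * (Finset.univ.filter fun a : Fin n → Fin k =>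
        3 * ∑ i, (a i : ℕ) ≤ (k - 1) * n).card :=
  sliceRank_tensorPow_le_general F k n hF
end

section
/- Let H be a finite abelian group with H ≅ (Z/qZ)^n × G for a prime power q = p^r. Then over F_p, slicerank(D_H) ≤ |G| · 3 · N(q,n), where N(q,n) is the number of tuples a ∈ {0,…,q−1}^n with Σ_i a_i ≤ (q−1)n/3, and D_H(x,y,z) = [x+y+z = 0]. Consequently every tricolored sum-free set in H has cardinality at most 3 · |G| · N(q,n). -/
open Finset

/-- A tricolored sum-free set in an abelian group `H`, encoded as the
3-dimensional perfect matching `M` itself (a finite set of triples):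
every triple of `M` sums to zero, and whenever a "mixed" triple
`(p.1, q.2.1, r.2.2)` with `p q r ∈ M` sums to zero we must have `p = q = r`
(this encodes both the perfect-matching property and that no other triple of
`S × T × U` sums to zero, where `S, T, U` are the projections of `M`). -/
def IsTricoloredSumFree {H : Type*} [AddCommGroup H] (M : Finset (H × H × H)) : Prop :=
  (∀ p ∈ M, p.1 + p.2.1 + p.2.2 = 0) ∧
  (∀ p ∈ M, ∀ q ∈ M, ∀ r ∈ M, p.1 + q.2.1 + r.2.2 = 0 → p = q ∧ q = r)

section AuxNumberTheory

variable {p : ℕ} [Fact p.Prime]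

omit [Fact p.Prime] in
lemma CLP.mul_pred_add (P : ℕ) (hp : 1 ≤ p) (hP : 1 ≤ P) :
    p * P - 1 = p * (P - 1) + (p - 1) := by
  have h1 : p * (P - 1) = p * P - p := by rw [Nat.mul_sub, mul_one]
  have h2 : p ≤ p * P := Nat.le_mul_of_pos_right _ (by omega)
  omega

omit [Fact p.Prime] in
lemma CLP.choose_pred_eq (X : ℕ) (hX : X < p) :
    X.choose (p - 1) = if X = p - 1 then 1 else 0 := by
  split_ifs with h
  · rw [h, Nat.choose_self]
  · exact Nat.choose_eq_zero_of_lt (by omega)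

lemma CLP.lucas_pow (r m : ℕ) :
    ((m.choose (p ^ r - 1) : ZMod p)) = if m % p ^ r = p ^ r - 1 then 1 else 0 := by
  have hp : 2 ≤ p := (Fact.out : p.Prime).two_le
  induction r generalizing m with
  | zero => simp [Nat.mod_one]
  | succ r ih =>
    have hq : 1 ≤ p ^ r := Nat.one_le_pow _ _ (by omega)
    have hps : p ^ (r + 1) = p * p ^ r := by rw [pow_succ]; ring
    have key : p ^ (r + 1) - 1 = p * (p ^ r - 1) + (p - 1) := by
      rw [hps]; exact CLP.mul_pred_add _ (by omega) hq
    have hmod : (p ^ (r + 1) - 1) % p = p - 1 := by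
      rw [key, Nat.mul_add_mod, Nat.mod_eq_of_lt (by omega)]
    have hdiv : (p ^ (r + 1) - 1) / p = p ^ r - 1 := by
      rw [key, Nat.mul_add_div (by omega), Nat.div_eq_of_lt (by omega), add_zero]
    have lucas' : ((m.choose (p ^ (r + 1) - 1) : ZMod p))
        = ((m % p).choose ((p ^ (r + 1) - 1) % p) : ZMod p)
          * ((m / p).choose ((p ^ (r + 1) - 1) / p) : ZMod p) := by
      have := (ZMod.intCast_eq_intCast_iff' _ _ _).mpr
        (Choose.choose_modEq_choose_mod_mul_choose_div (p := p) (n := m) (k := p ^ (r + 1) - 1))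
      push_cast at this
      exact_mod_cast this
    rw [lucas', hmod, hdiv, CLP.choose_pred_eq (m % p) (Nat.mod_lt _ (by omega)), ih]
    have hiff : m % p ^ (r + 1) = p ^ (r + 1) - 1 ↔
        (m % p = p - 1 ∧ m / p % p ^ r = p ^ r - 1) := by
      have e1 : m % p ^ (r + 1) % p = m % p := by
        rw [hps]; exact Nat.mod_mod_of_dvd m ⟨p ^ r, rfl⟩
      have e2 : m % p ^ (r + 1) / p = m / p % p ^ r := by
        rw [hps]; exact Nat.mod_mul_right_div_self m p (p ^ r)
      constructor
      · intro h
        rw [← e1, ← e2, h, hmod, hdiv]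
        exact ⟨rfl, rfl⟩
      · rintro ⟨h1, h2⟩
        have h3 := Nat.div_add_mod (m % p ^ (r + 1)) p
        rw [e1, e2, h1, h2] at h3
        rw [← h3, key]
    simp only [hiff]
    push_cast
    split_ifs with h1 h2 h3 <;> simp_all

lemma CLP.van2 {q : ℕ} (Y Z m : ℕ) (hm : m < q) :
    ∑ bc : Fin q × Fin q, (if (bc.1 : ℕ) + (bc.2 : ℕ) = m
      then Y.choose bc.1 * Z.choose bc.2 else 0) = (Y + Z).choose m := by
  have hq : 0 < q := lt_of_le_of_lt (Nat.zero_le m) hm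
  rw [Nat.add_choose_eq, ← Finset.sum_filter]
  refine Finset.sum_nbij' (i := fun bc : Fin q × Fin q => ((bc.1 : ℕ), (bc.2 : ℕ)))
    (j := fun ij : ℕ × ℕ => ((⟨ij.1 % q, Nat.mod_lt _ hq⟩ : Fin q),
      (⟨ij.2 % q, Nat.mod_lt _ hq⟩ : Fin q)))
    ?_ ?_ ?_ ?_ ?_
  · intro a ha
    simp only [Finset.mem_filter, Finset.mem_univ, true_and] at ha
    simpa [Finset.mem_antidiagonal] using ha
  · intro ij hij
    rw [Finset.HasAntidiagonal.mem_antidiagonal] at hij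
    have h1 : ij.1 < q := lt_of_le_of_lt (le_trans (Nat.le_add_right _ _) hij.le) hm
    have h2 : ij.2 < q := lt_of_le_of_lt (le_trans (Nat.le_add_left _ _) hij.le) hm
    simp [Nat.mod_eq_of_lt h1, Nat.mod_eq_of_lt h2, hij]
  · intro a ha
    ext <;> simp [Nat.mod_eq_of_lt (Fin.is_lt _)]
  · intro ij hij
    rw [Finset.HasAntidiagonal.mem_antidiagonal] at hij
    have h1 : ij.1 < q := lt_of_le_of_lt (le_trans (Nat.le_add_right _ _) hij.le) hm
    have h2 : ij.2 < q := lt_of_le_of_lt (le_trans (Nat.le_add_left _ _) hij.le) hm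
    ext <;> simp [Nat.mod_eq_of_lt h1, Nat.mod_eq_of_lt h2]
  · intro a ha
    rfl

lemma CLP.van1 {q : ℕ} (X : ℕ) (W : ℕ → ℕ) (hq : 0 < q) :
    ∑ a : Fin q, X.choose a * W (q - 1 - (a : ℕ))
      = ∑ ij ∈ Finset.HasAntidiagonal.antidiagonal (q - 1), X.choose ij.1 * W ij.2 := by
  refine Finset.sum_nbij' (i := fun a : Fin q => ((a : ℕ), q - 1 - (a : ℕ)))
    (j := fun ij : ℕ × ℕ => (⟨ij.1 % q, Nat.mod_lt _ hq⟩ : Fin q)) ?_ ?_ ?_ ?_ ?_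
  · intro a _
    simp only [Finset.HasAntidiagonal.mem_antidiagonal]
    have := a.is_lt; omega
  · intro ij hij
    exact Finset.mem_univ _
  · intro a _
    ext; simp [Nat.mod_eq_of_lt (Fin.is_lt _)]
  · intro ij hij
    rw [Finset.HasAntidiagonal.mem_antidiagonal] at hij
    have h1 : ij.1 < q := by omega
    ext <;> simp [Nat.mod_eq_of_lt h1] <;> omega
  · intro a _
    rfl

lemma CLP.van3 {q : ℕ} (X Y Z : ℕ) (hq : 0 < q) :
    ∑ u : Fin q × Fin q × Fin q, (if (u.1 : ℕ) + (u.2.1 : ℕ) + (u.2.2 : ℕ) = q - 1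
      then X.choose u.1 * Y.choose u.2.1 * Z.choose u.2.2 else 0)
      = (X + Y + Z).choose (q - 1) := by
  rw [Fintype.sum_prod_type]
  have step : ∀ a : Fin q,
      (∑ bc : Fin q × Fin q, if (a : ℕ) + (bc.1 : ℕ) + (bc.2 : ℕ) = q - 1
        then X.choose a * Y.choose bc.1 * Z.choose bc.2 else 0)
      = X.choose a * (Y + Z).choose (q - 1 - (a : ℕ)) := by
    intro a
    have ha : (a : ℕ) ≤ q - 1 := by have := a.is_lt; omega
    have hv := CLP.van2 (q := q) Y Z (q - 1 - (a : ℕ)) (by omega)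
    rw [← hv, Finset.mul_sum]
    refine Finset.sum_congr rfl fun bc _ => ?_
    have hcond : ((a : ℕ) + (bc.1 : ℕ) + (bc.2 : ℕ) = q - 1) ↔
        ((bc.1 : ℕ) + (bc.2 : ℕ) = q - 1 - (a : ℕ)) := by omega
    rw [if_congr hcond rfl rfl, mul_ite, mul_zero, mul_assoc]
  simp only [step]
  rw [CLP.van1 X (fun m => (Y + Z).choose m) hq, ← Nat.add_choose_eq, add_assoc]

lemma CLP.coordKey (p r q : ℕ) [Fact p.Prime] (hq : q = p ^ r) (hq1 : 0 < q)
    (x y z : ZMod q) :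
    (if x + y + z = 0 then (1 : ZMod p) else 0)
      = ∑ u : Fin q × Fin q × Fin q, (if (u.1 : ℕ) + (u.2.1 : ℕ) + (u.2.2 : ℕ) = q - 1
          then ((x.val.choose u.1 * y.val.choose u.2.1 * (z - 1).val.choose u.2.2 : ℕ) : ZMod p)
          else 0) := by
  haveI : NeZero q := ⟨hq1.ne'⟩
  have hsum : (∑ u : Fin q × Fin q × Fin q, (if (u.1 : ℕ) + (u.2.1 : ℕ) + (u.2.2 : ℕ) = q - 1
      then ((x.val.choose u.1 * y.val.choose u.2.1 * (z - 1).val.choose u.2.2 : ℕ) : ZMod p)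
      else 0))
      = (((x.val + y.val + (z - 1).val).choose (q - 1) : ℕ) : ZMod p) := by
    rw [← CLP.van3 x.val y.val (z - 1).val hq1]
    push_cast
    refine Finset.sum_congr rfl fun u _ => ?_
    split_ifs <;> push_cast <;> ring
  rw [hsum]
  subst hq
  rw [CLP.lucas_pow]
  congr 1
  have hlt : p ^ r - 1 < p ^ r := by omega
  have hmodeq : (x.val + y.val + (z - 1).val) % p ^ r = p ^ r - 1 ↔
      ((x.val + y.val + (z - 1).val : ℕ) : ZMod (p ^ r)) = ((p ^ r - 1 : ℕ) : ZMod (p ^ r)) := by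
    rw [ZMod.natCast_eq_natCast_iff]
    unfold Nat.ModEq
    rw [Nat.mod_eq_of_lt hlt]
  have hcast : ((x.val + y.val + (z - 1).val : ℕ) : ZMod (p ^ r)) = x + y + (z - 1) := by
    push_cast
    simp [ZMod.natCast_val, ZMod.cast_id]
  have hlast : ((p ^ r - 1 : ℕ) : ZMod (p ^ r)) = -1 := by
    have h0 : ((p ^ r : ℕ) : ZMod (p ^ r)) = 0 := ZMod.natCast_self _
    rw [Nat.cast_sub (by omega), h0]; ring
  have hiff : x + y + (z - 1) = -1 ↔ x + y + z = 0 := by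
    constructor <;> intro h <;> linear_combination h
  rw [eq_iff_iff, hmodeq, hcast, hlast, hiff]

lemma CLP.globalKey (p r q n : ℕ) [Fact p.Prime] (hq : q = p ^ r) (hq1 : 0 < q)
    (u v w : Fin n → ZMod q) :
    (if u + v + w = 0 then (1 : ZMod p) else 0)
      = ∑ t ∈ (univ : Finset ((Fin n → Fin q) × (Fin n → Fin q) × (Fin n → Fin q))).filter
          (fun t => ∀ i, (t.1 i : ℕ) + (t.2.1 i : ℕ) + (t.2.2 i : ℕ) = q - 1),
        (∏ i, ((u i).val.choose (t.1 i) : ZMod p))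
        * (∏ i, ((v i).val.choose (t.2.1 i) : ZMod p))
        * (∏ i, ((((w i) - 1).val.choose (t.2.2 i) : ℕ) : ZMod p)) := by
  classical
  have step1 : (if u + v + w = 0 then (1 : ZMod p) else 0)
      = ∏ i, (if u i + v i + w i = 0 then (1 : ZMod p) else 0) := by
    rw [Fintype.prod_boole]
    congr 1
    rw [eq_iff_iff, funext_iff]
    simp
  have coord' : ∀ x y z : ZMod q, (if x + y + z = 0 then (1 : ZMod p) else 0)
      = ∑ uu ∈ (univ : Finset (Fin q × Fin q × Fin q)).filter
          (fun uu => (uu.1 : ℕ) + (uu.2.1 : ℕ) + (uu.2.2 : ℕ) = q - 1),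
        ((x.val.choose uu.1 * y.val.choose uu.2.1 * (z - 1).val.choose uu.2.2 : ℕ) : ZMod p) := by
    intro x y z
    rw [CLP.coordKey p r q hq hq1 x y z, Finset.sum_filter]
  simp only [coord'] at step1
  rw [step1, Finset.prod_univ_sum]
  refine Finset.sum_nbij'
    (i := fun g : Fin n → Fin q × Fin q × Fin q =>
      ((fun i => (g i).1, fun i => (g i).2.1, fun i => (g i).2.2) :
        (Fin n → Fin q) × (Fin n → Fin q) × (Fin n → Fin q)))
    (j := fun t => fun i => (t.1 i, t.2.1 i, t.2.2 i)) ?_ ?_ ?_ ?_ ?_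
  · intro g hg
    rw [Fintype.mem_piFinset] at hg
    simp only [Finset.mem_filter, Finset.mem_univ, true_and]
    intro i
    have := hg i
    simp only [Finset.mem_filter, Finset.mem_univ, true_and] at this
    exact this
  · intro t ht
    rw [Fintype.mem_piFinset]
    simp only [Finset.mem_filter, Finset.mem_univ, true_and] at ht ⊢
    intro i
    exact ht i
  · intro g _; rfl
  · intro t _; rfl
  · intro g _
    push_cast
    rw [← Finset.prod_mul_distrib, ← Finset.prod_mul_distrib]

end AuxNumberTheory

section DiagLemma

lemma CLP.diag_card_le {ι F : Type*} [Fintype ι] [DecidableEq ι] [Field F] [Fintype F]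
    {k : ℕ} (t : Fin k → ι → ι → ι → F) (h1 : ∀ i, IsSliceTerm (t i))
    (h2 : ∀ x y z : ι, (if x = y ∧ y = z then (1 : F) else 0) = ∑ i, t i x y z) :
    Fintype.card ι ≤ k := by
  classical
  set P : Fin k → Prop := fun i => ∃ (f : ι → ι → F) (g : ι → F),
    ∀ x y z, t i x y z = f x y * g z with hP
  set Z : Finset (Fin k) := univ.filter P with hZdef
  have hchoice : ∀ i : Fin k, ∃ (f : ι → ι → F) (g : ι → F),
      (P i → ∀ x y z, t i x y z = f x y * g z) := by
    intro i
    by_cases h : P i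
    · obtain ⟨f, g, hfg⟩ := h; exact ⟨f, g, fun _ => hfg⟩
    · exact ⟨0, 0, fun hc => absurd hc h⟩
  choose fz gz hz using hchoice
  let Φ : (ι → F) →ₗ[F] (Z → F) :=
    { toFun := fun h => fun i => ∑ z, gz i z * h z
      map_add' := by
        intro a b; funext i; simp [mul_add, Finset.sum_add_distrib]
      map_smul' := by
        intro c a; funext i
        simp only [Pi.smul_apply, smul_eq_mul, RingHom.id_apply, Finset.mul_sum]
        exact Finset.sum_congr rfl fun z _ => by ring }
  set W := LinearMap.ker Φ with hW
  have hrank1 : Fintype.card ι ≤ Z.card + Module.finrank F W := by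
    have hrn := LinearMap.finrank_range_add_finrank_ker Φ
    rw [Module.finrank_fintype_fun_eq_card] at hrn
    have hle : Module.finrank F (LinearMap.range Φ) ≤ Z.card := by
      have := Submodule.finrank_le (LinearMap.range Φ)
      rwa [Module.finrank_fintype_fun_eq_card, Fintype.card_coe] at this
    rw [← hW] at hrn
    omega
  set WS : Finset (ι → F) := univ.filter (· ∈ W) with hWSdef
  have hWSne : WS.Nonempty := ⟨0, by simp [hWSdef, Submodule.zero_mem]⟩
  obtain ⟨h, hhWS, hmax⟩ := Finset.exists_max_image WS
    (fun h => (univ.filter (fun z => h z ≠ 0)).card) hWSne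
  have hhW : h ∈ W := by simpa [hWSdef] using hhWS
  set S : Finset ι := univ.filter (fun z => h z ≠ 0) with hSdef
  have hrank2 : Module.finrank F W ≤ S.card := by
    let ρ : W →ₗ[F] (S → F) :=
      { toFun := fun w => fun i => w.1 i
        map_add' := by intro a b; funext i; rfl
        map_smul' := by intro c a; funext i; rfl }
    have hρ : Function.Injective ρ := by
      rw [← LinearMap.ker_eq_bot, LinearMap.ker_eq_bot']
      intro w hw
      by_contra hne
      have hex : ∃ z₀, w.1 z₀ ≠ 0 := by
        by_contra hall
        push_neg at hall
        exact hne (Subtype.ext (funext hall))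
      obtain ⟨z₀, hz₀⟩ := hex
      have hz₀S : z₀ ∉ S := by
        intro hmem
        have : w.1 z₀ = 0 := congr_fun hw ⟨z₀, hmem⟩
        exact hz₀ this
      have hhz₀ : h z₀ = 0 := by
        by_contra hne0
        exact hz₀S (by simp [hSdef, hne0])
      have hw0 : ∀ z ∈ S, w.1 z = 0 := fun z hzz => congr_fun hw ⟨z, hzz⟩
      set h' := h + w.1 with hh'
      have hh'W : h' ∈ W := Submodule.add_mem _ hhW w.2
      have hsub : S ⊂ univ.filter (fun z => h' z ≠ 0) := by
        constructor
        · intro z hzz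
          have h1z : h z ≠ 0 := (mem_filter.mp hzz).2
          have h2z : w.1 z = 0 := hw0 z hzz
          simp only [mem_filter, mem_univ, true_and, hh', Pi.add_apply, h2z, add_zero]
          exact h1z
        · intro hcon
          have : z₀ ∈ S := hcon (by
            simp only [mem_filter, mem_univ, true_and, hh', Pi.add_apply, hhz₀, zero_add]
            exact hz₀)
          exact hz₀S this
      have hlt := Finset.card_lt_card hsub
      have hle := hmax h' (by simp [hWSdef, hh'W])
      omega
    calc Module.finrank F W ≤ Module.finrank F (↥S → F) :=
          LinearMap.finrank_le_finrank_of_injective hρ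
      _ = S.card := by rw [Module.finrank_fintype_fun_eq_card, Fintype.card_coe]
  have hchoice2 : ∀ i : Fin k, ∃ (uu vv : ι → F),
      (¬ P i → ∀ x y, ∑ z, t i x y z * h z = uu x * vv y) := by
    intro i
    by_cases hPi : P i
    · exact ⟨0, 0, fun hc => absurd hPi hc⟩
    · rcases h1 i with hcase | hcase | hcase
      · exact absurd hcase hPi
      · obtain ⟨f, g, hfg⟩ := hcase
        refine ⟨fun x => ∑ z, f x z * h z, g, fun _ x y => ?_⟩
        simp only [hfg]
        rw [Finset.sum_mul]
        exact Finset.sum_congr rfl fun z _ => by ring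
      · obtain ⟨f, g, hfg⟩ := hcase
        refine ⟨g, fun y => ∑ z, f y z * h z, fun _ x y => ?_⟩
        simp only [hfg]
        rw [Finset.mul_sum]
        exact Finset.sum_congr rfl fun z _ => by ring
  choose uu vv huv using hchoice2
  have hzero : ∀ i ∈ Z, ∀ x y : ι, ∑ z, t i x y z * h z = 0 := by
    intro i hi x y
    have hiP : P i := (mem_filter.mp hi).2
    have hΦ0 : Φ h = 0 := hhW
    have hsum0 : ∑ z, gz i z * h z = 0 := congr_fun hΦ0 ⟨i, hi⟩
    calc ∑ z, t i x y z * h z = ∑ z, fz i x y * (gz i z * h z) := by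
          refine Finset.sum_congr rfl fun z _ => ?_
          rw [hz i hiP]; ring
      _ = fz i x y * ∑ z, gz i z * h z := by rw [Finset.mul_sum]
      _ = 0 := by rw [hsum0, mul_zero]
  set NZ : Finset (Fin k) := univ.filter (fun i => ¬ P i) with hNZdef
  have key : ∀ x y : ι, (if x = y then h x else 0) = ∑ i ∈ NZ, uu i x * vv i y := by
    intro x y
    have e1 : ∑ z, (if x = y ∧ y = z then (1 : F) else 0) * h z
        = (if x = y then h x else 0) := by
      by_cases hxy : x = y
      · subst hxy
        simp only [true_and, if_pos rfl]
        simp only [ite_mul, one_mul, zero_mul]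
        exact Fintype.sum_ite_eq x h
      · simp [hxy]
    have e2 : ∑ z, (if x = y ∧ y = z then (1 : F) else 0) * h z
        = ∑ i, ∑ z, t i x y z * h z := by
      simp only [h2, Finset.sum_mul]
      rw [Finset.sum_comm]
    rw [← e1, e2, ← Finset.sum_filter_add_sum_filter_not univ P]
    rw [Finset.sum_congr rfl (fun i hi => hzero i hi x y)]
    rw [Finset.sum_const_zero, zero_add]
    exact Finset.sum_congr rfl fun i hi => huv i (mem_filter.mp hi).2 x y
  set fam : S → (ι → F) := fun x => fun y => if (x : ι) = y then h x else 0 with hfam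
  have hspan : ∀ x : S, fam x ∈ Submodule.span F (Set.range (fun i : NZ => vv i)) := by
    intro x
    have : fam x = ∑ i ∈ NZ.attach, uu i (x : ι) • vv i := by
      funext y
      rw [hfam]
      simp only [Finset.sum_apply, Pi.smul_apply, smul_eq_mul]
      rw [key (x : ι) y, ← Finset.sum_attach NZ (fun i => uu i (x : ι) * vv i y)]
    rw [this]
    exact Submodule.sum_mem _ fun i _ => Submodule.smul_mem _ _
      (Submodule.subset_span ⟨i, rfl⟩)
  have hli : LinearIndependent F fam := by
    rw [Fintype.linearIndependent_iff]
    intro c hc x₀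
    have hcc := congr_fun hc (x₀ : ι)
    simp only [Finset.sum_apply, Pi.smul_apply, smul_eq_mul, Pi.zero_apply, hfam] at hcc
    rw [Finset.sum_eq_single x₀ (fun b _ hb => by
        have hbe : (b : ι) ≠ (x₀ : ι) := fun hbe => hb (Subtype.ext hbe)
        simp [hbe])
      (fun hx => absurd (mem_univ x₀) hx)] at hcc
    rw [if_pos rfl] at hcc
    have hx₀ : h (x₀ : ι) ≠ 0 := (mem_filter.mp x₀.2).2
    rcases mul_eq_zero.mp hcc with hc0 | hc0
    · exact hc0
    · exact absurd hc0 hx₀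
  have hrank3 : S.card ≤ NZ.card := by
    set Sp := Submodule.span F (Set.range (fun i : NZ => vv i)) with hSp
    have hli2 : LinearIndependent F (fun x : S => (⟨fam x, hspan x⟩ : Sp)) :=
      LinearIndependent.of_comp Sp.subtype hli
    calc S.card = Fintype.card S := (Fintype.card_coe S).symm
      _ ≤ Module.finrank F Sp := hli2.fintype_card_le_finrank
      _ ≤ Fintype.card NZ := finrank_range_le_card _
      _ = NZ.card := Fintype.card_coe NZ
  have hfinal : Z.card + NZ.card = k := by
    have := Finset.card_filter_add_card_filter_not (s := (univ : Finset (Fin k))) (p := P)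
    simpa [hZdef, hNZdef, Finset.card_univ] using this
  omega

end DiagLemma

lemma CLP.sliceRank_le_of_decomp {X Y Z 𝔽 : Type*} [Field 𝔽] {T : X → Y → Z → 𝔽}
    {ι : Type*} [Fintype ι] (t : ι → X → Y → Z → 𝔽)
    (h1 : ∀ i, IsSliceTerm (t i)) (h2 : ∀ x y z, T x y z = ∑ i, t i x y z) :
    sliceRank T ≤ Fintype.card ι := by
  apply Nat.sInf_le
  refine ⟨fun j => t ((Fintype.equivFin ι).symm j), fun j => h1 _, fun x y z => ?_⟩
  rw [h2 x y z]
  exact (Equiv.sum_comp (Fintype.equivFin ι).symm (fun i => t i x y z)).symm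

lemma CLP.isSliceTerm_comp {X Y Z X' Y' Z' 𝔽 : Type*} [Field 𝔽] {t : X → Y → Z → 𝔽}
    (h : IsSliceTerm t) (fx : X' → X) (fy : Y' → Y) (fz : Z' → Z) :
    IsSliceTerm (fun x y z => t (fx x) (fy y) (fz z)) := by
  rcases h with ⟨f, g, hfg⟩ | ⟨f, g, hfg⟩ | ⟨f, g, hfg⟩
  · exact Or.inl ⟨fun x y => f (fx x) (fy y), fun z => g (fz z), fun _ _ _ => hfg _ _ _⟩
  · exact Or.inr (Or.inl ⟨fun x z => f (fx x) (fz z), fun y => g (fy y), fun _ _ _ => hfg _ _ _⟩)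
  · exact Or.inr (Or.inr ⟨fun y z => f (fy y) (fz z), fun x => g (fx x), fun _ _ _ => hfg _ _ _⟩)

lemma CLP.gsum_collapse {G F : Type*} [AddGroup G] [Fintype G] [DecidableEq G] [CommRing F]
    (w u : G) (A1 A2 : F) :
    ∑ g : G, (if w = -g then A1 else 0) * (if u = g then A2 else 0)
      = (if w = -u then A1 else 0) * A2 := by
  have hrw : ∀ g : G, (if w = -g then A1 else 0) * (if u = g then A2 else 0)
      = if u = g then (if w = -g then A1 else 0) * A2 else 0 := by
    intro g
    by_cases h : u = g <;> simp [h]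
  rw [Finset.sum_congr rfl fun g _ => hrw g]
  exact Fintype.sum_ite_eq u (fun g => (if w = -g then A1 else 0) * A2)

lemma CLP.ite_and_one {F : Type*} [MulZeroOneClass F] (C1 C2 : Prop)
    [Decidable C1] [Decidable C2] [Decidable (C1 ∧ C2)] :
    (if C1 ∧ C2 then (1 : F) else 0)
      = (if C1 then (1 : F) else 0) * (if C2 then (1 : F) else 0) := by
  by_cases h1 : C1 <;> by_cases h2 : C2 <;> simp [h1, h2]

namespace CLP

section Construction

variable (p r q n : ℕ) [Fact p.Prime]
variable {G H : Type*} [AddCommGroup G] [DecidableEq G] [Fintype G]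
  [AddCommGroup H] [Fintype H] [DecidableEq H]
variable (e : H ≃+ ((Fin n → ZMod q) × G))

def Aset : Finset (Fin n → Fin q) :=
  Finset.univ.filter fun a : Fin n → Fin q => 3 * ∑ i, (a i : ℕ) ≤ (q - 1) * n

def VTset : Finset ((Fin n → Fin q) × (Fin n → Fin q) × (Fin n → Fin q)) :=
  (univ : Finset _).filter
    (fun t => ∀ i, (t.1 i : ℕ) + (t.2.1 i : ℕ) + (t.2.2 i : ℕ) = q - 1)

def phi1 : (Fin n → Fin q) → H → ZMod p :=
  fun a x => ∏ i, (((e x).1 i).val.choose (a i) : ZMod p)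

def phi3 : (Fin n → Fin q) → H → ZMod p :=
  fun c z => ∏ i, (((((e z).1 i) - 1).val.choose (c i) : ℕ) : ZMod p)

def Efun : H → H → H → ((Fin n → Fin q) × (Fin n → Fin q) × (Fin n → Fin q)) → ZMod p :=
  fun x y z t => if (e x).2 + (e y).2 + (e z).2 = 0
    then phi1 p q n e t.1 x * phi1 p q n e t.2.1 y * phi3 p q n e t.2.2 z else 0

def T1 : G → ↥(Aset q n) → H → H → H → ZMod p := fun g0 a x y z =>
  (∑ t ∈ (VTset q n).filter (fun t => t.1 = (a : Fin n → Fin q)),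
    if (e y).2 + (e z).2 = -g0 then phi1 p q n e t.2.1 y * phi3 p q n e t.2.2 z else 0)
  * (if (e x).2 = g0 then phi1 p q n e (a : Fin n → Fin q) x else 0)

def T2 : G → ↥(Aset q n) → H → H → H → ZMod p := fun g0 b x y z =>
  (∑ t ∈ (VTset q n).filter (fun t => t.2.1 = (b : Fin n → Fin q) ∧ t.1 ∉ Aset q n),
    if (e x).2 + (e z).2 = -g0 then phi1 p q n e t.1 x * phi3 p q n e t.2.2 z else 0)
  * (if (e y).2 = g0 then phi1 p q n e (b : Fin n → Fin q) y else 0)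

def T3 : G → ↥(Aset q n) → H → H → H → ZMod p := fun g0 c x y z =>
  (∑ t ∈ (VTset q n).filter
      (fun t => t.2.2 = (c : Fin n → Fin q) ∧ t.1 ∉ Aset q n ∧ t.2.1 ∉ Aset q n),
    if (e x).2 + (e y).2 = -g0 then phi1 p q n e t.1 x * phi1 p q n e t.2.1 y else 0)
  * (if (e z).2 = g0 then phi3 p q n e (c : Fin n → Fin q) z else 0)

def tt : (G × (↥(Aset q n) ⊕ ↥(Aset q n) ⊕ ↥(Aset q n))) → H → H → H → ZMod p := fun gi =>
  Sum.elim (fun a => T1 p q n e gi.1 a)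
    (Sum.elim (fun b => T2 p q n e gi.1 b) (fun c => T3 p q n e gi.1 c)) gi.2

lemma hmin : ∀ tr ∈ VTset q n, tr.1 ∉ Aset q n → tr.2.1 ∉ Aset q n → tr.2.2 ∈ Aset q n := by
  intro tr htr ha hb
  simp only [VTset, mem_filter, mem_univ, true_and] at htr
  simp only [Aset, mem_filter, mem_univ, true_and, not_le] at ha hb ⊢
  have hsum : (∑ i, (tr.1 i : ℕ)) + (∑ i, (tr.2.1 i : ℕ)) + (∑ i, (tr.2.2 i : ℕ))
      = (q - 1) * n := by
    rw [← Finset.sum_add_distrib, ← Finset.sum_add_distrib]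
    rw [Finset.sum_congr rfl fun i _ => htr i]
    simp [Finset.sum_const, Finset.card_univ, mul_comm]
  omega

lemma hslice : ∀ gi, IsSliceTerm (tt p q n e gi) := by
  rintro ⟨g0, (a | b | c)⟩
  · exact Or.inr (Or.inr ⟨fun y z => ∑ t ∈ (VTset q n).filter
        (fun t => t.1 = (a : Fin n → Fin q)),
      if (e y).2 + (e z).2 = -g0 then phi1 p q n e t.2.1 y * phi3 p q n e t.2.2 z else 0,
      fun x => if (e x).2 = g0 then phi1 p q n e (a : Fin n → Fin q) x else 0,
      fun x y z => rfl⟩)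
  · exact Or.inr (Or.inl ⟨fun x z => ∑ t ∈ (VTset q n).filter
        (fun t => t.2.1 = (b : Fin n → Fin q) ∧ t.1 ∉ Aset q n),
      if (e x).2 + (e z).2 = -g0 then phi1 p q n e t.1 x * phi3 p q n e t.2.2 z else 0,
      fun y => if (e y).2 = g0 then phi1 p q n e (b : Fin n → Fin q) y else 0,
      fun x y z => rfl⟩)
  · exact Or.inl ⟨fun x y => ∑ t ∈ (VTset q n).filter
        (fun t => t.2.2 = (c : Fin n → Fin q) ∧ t.1 ∉ Aset q n ∧ t.2.1 ∉ Aset q n),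
      if (e x).2 + (e y).2 = -g0 then phi1 p q n e t.1 x * phi1 p q n e t.2.1 y else 0,
      fun z => if (e z).2 = g0 then phi3 p q n e (c : Fin n → Fin q) z else 0,
      fun x y z => rfl⟩

lemma hDH (hq : q = p ^ r) (hq1 : 0 < q) :
    ∀ x y z : H, (if x + y + z = 0 then (1 : ZMod p) else 0)
      = ∑ t ∈ VTset q n, Efun p q n e x y z t := by
  intro x y z
  have h0 : (x + y + z = 0) ↔
      (((e x).1 + (e y).1 + (e z).1 = 0) ∧ ((e x).2 + (e y).2 + (e z).2 = 0)) := by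
    have he : e (x + y + z) = e x + e y + e z := by rw [map_add, map_add]
    rw [← AddEquiv.map_eq_zero_iff e, he, Prod.ext_iff]
    simp
  have hsplit : (if x + y + z = 0 then (1 : ZMod p) else 0)
      = (if (e x).1 + (e y).1 + (e z).1 = 0 then (1 : ZMod p) else 0)
        * (if (e x).2 + (e y).2 + (e z).2 = 0 then (1 : ZMod p) else 0) := by
    rw [if_congr h0 rfl rfl]
    exact CLP.ite_and_one _ _
  rw [hsplit, CLP.globalKey p r q n hq hq1 (e x).1 (e y).1 (e z).1, Finset.sum_mul]
  refine Finset.sum_congr rfl fun t _ => ?_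
  simp only [Efun, phi1, phi3, VTset]
  simp only [mul_ite, mul_one, mul_zero]

lemma hclass1 (x y z : H) : (∑ g0 : G, ∑ a : ↥(Aset q n), T1 p q n e g0 a x y z)
    = ∑ t ∈ (VTset q n).filter (fun t => t.1 ∈ Aset q n), Efun p q n e x y z t := by
  have step1 : ∀ (g0 : G) (a : ↥(Aset q n)), T1 p q n e g0 a x y z
      = ∑ t ∈ (VTset q n).filter (fun t => t.1 = (a : Fin n → Fin q)),
          ((if (e y).2 + (e z).2 = -g0 then phi1 p q n e t.2.1 y * phi3 p q n e t.2.2 z else 0)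
            * (if (e x).2 = g0 then phi1 p q n e t.1 x else 0)) := by
    intro g0 a
    simp only [T1]
    rw [Finset.sum_mul]
    exact Finset.sum_congr rfl fun t ht => by rw [(mem_filter.mp ht).2]
  calc (∑ g0 : G, ∑ a : ↥(Aset q n), T1 p q n e g0 a x y z)
      = ∑ a : ↥(Aset q n), ∑ t ∈ (VTset q n).filter (fun t => t.1 = (a : Fin n → Fin q)),
          ∑ g0 : G, ((if (e y).2 + (e z).2 = -g0
              then phi1 p q n e t.2.1 y * phi3 p q n e t.2.2 z else 0)
            * (if (e x).2 = g0 then phi1 p q n e t.1 x else 0)) := by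
        simp only [step1]
        rw [Finset.sum_comm]
        exact Finset.sum_congr rfl fun a _ => by rw [Finset.sum_comm]
    _ = ∑ a : ↥(Aset q n), ∑ t ∈ (VTset q n).filter (fun t => t.1 = (a : Fin n → Fin q)),
          Efun p q n e x y z t := by
        refine Finset.sum_congr rfl fun a _ => Finset.sum_congr rfl fun t _ => ?_
        rw [CLP.gsum_collapse]
        simp only [Efun]
        have hcond : ((e y).2 + (e z).2 = -(e x).2) ↔
            ((e x).2 + (e y).2 + (e z).2 = 0) := by
          rw [eq_neg_iff_add_eq_zero]
          constructor <;> intro hh <;> (rw [← hh]; abel)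
        rw [if_congr hcond rfl rfl]
        split_ifs with hcnd
        · ring
        · simp
    _ = ∑ a ∈ Aset q n, ∑ t ∈ (VTset q n).filter (fun t => t.1 = a),
          Efun p q n e x y z t := by
        conv_rhs => rw [← Finset.sum_coe_sort (Aset q n)
          (fun a => ∑ t ∈ (VTset q n).filter (fun t => t.1 = a), Efun p q n e x y z t)]
    _ = ∑ a ∈ Aset q n, ∑ t ∈ ((VTset q n).filter (fun t => t.1 ∈ Aset q n)).filter
          (fun t => t.1 = a), Efun p q n e x y z t := by
        refine Finset.sum_congr rfl fun a ha => ?_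
        congr 1
        ext tr
        simp only [Finset.mem_filter]
        constructor
        · rintro ⟨h1, h2⟩; exact ⟨⟨h1, h2 ▸ ha⟩, h2⟩
        · rintro ⟨⟨h1, _⟩, h2⟩; exact ⟨h1, h2⟩
    _ = ∑ t ∈ (VTset q n).filter (fun t => t.1 ∈ Aset q n), Efun p q n e x y z t :=
        Finset.sum_fiberwise_of_maps_to (fun t ht => (Finset.mem_filter.mp ht).2)
          (Efun p q n e x y z)

lemma hclass2 (x y z : H) : (∑ g0 : G, ∑ b : ↥(Aset q n), T2 p q n e g0 b x y z)
    = ∑ t ∈ (VTset q n).filter (fun t => ¬ t.1 ∈ Aset q n ∧ t.2.1 ∈ Aset q n),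
        Efun p q n e x y z t := by
  have step1 : ∀ (g0 : G) (b : ↥(Aset q n)), T2 p q n e g0 b x y z
      = ∑ t ∈ (VTset q n).filter (fun t => t.2.1 = (b : Fin n → Fin q) ∧ t.1 ∉ Aset q n),
          ((if (e x).2 + (e z).2 = -g0 then phi1 p q n e t.1 x * phi3 p q n e t.2.2 z else 0)
            * (if (e y).2 = g0 then phi1 p q n e t.2.1 y else 0)) := by
    intro g0 b
    simp only [T2]
    rw [Finset.sum_mul]
    exact Finset.sum_congr rfl fun t ht => by rw [(mem_filter.mp ht).2.1]
  calc (∑ g0 : G, ∑ b : ↥(Aset q n), T2 p q n e g0 b x y z)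
      = ∑ b : ↥(Aset q n), ∑ t ∈ (VTset q n).filter
          (fun t => t.2.1 = (b : Fin n → Fin q) ∧ t.1 ∉ Aset q n),
          ∑ g0 : G, ((if (e x).2 + (e z).2 = -g0
              then phi1 p q n e t.1 x * phi3 p q n e t.2.2 z else 0)
            * (if (e y).2 = g0 then phi1 p q n e t.2.1 y else 0)) := by
        simp only [step1]
        rw [Finset.sum_comm]
        exact Finset.sum_congr rfl fun b _ => by rw [Finset.sum_comm]
    _ = ∑ b : ↥(Aset q n), ∑ t ∈ (VTset q n).filter
          (fun t => t.2.1 = (b : Fin n → Fin q) ∧ t.1 ∉ Aset q n),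
          Efun p q n e x y z t := by
        refine Finset.sum_congr rfl fun b _ => Finset.sum_congr rfl fun t _ => ?_
        rw [CLP.gsum_collapse]
        simp only [Efun]
        have hcond : ((e x).2 + (e z).2 = -(e y).2) ↔
            ((e x).2 + (e y).2 + (e z).2 = 0) := by
          rw [eq_neg_iff_add_eq_zero]
          constructor <;> intro hh <;> (rw [← hh]; abel)
        rw [if_congr hcond rfl rfl]
        split_ifs with hcnd
        · ring
        · simp
    _ = ∑ b ∈ Aset q n, ∑ t ∈ (VTset q n).filter (fun t => t.2.1 = b ∧ t.1 ∉ Aset q n),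
          Efun p q n e x y z t := by
        conv_rhs => rw [← Finset.sum_coe_sort (Aset q n)
          (fun b => ∑ t ∈ (VTset q n).filter (fun t => t.2.1 = b ∧ t.1 ∉ Aset q n),
            Efun p q n e x y z t)]
    _ = ∑ b ∈ Aset q n, ∑ t ∈ ((VTset q n).filter
          (fun t => ¬ t.1 ∈ Aset q n ∧ t.2.1 ∈ Aset q n)).filter
          (fun t => t.2.1 = b), Efun p q n e x y z t := by
        refine Finset.sum_congr rfl fun b hb => ?_
        congr 1
        ext tr
        simp only [Finset.mem_filter]
        constructor
        · rintro ⟨h1, h2, h3⟩; exact ⟨⟨h1, h3, h2 ▸ hb⟩, h2⟩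
        · rintro ⟨⟨h1, h3, _⟩, h2⟩; exact ⟨h1, h2, h3⟩
    _ = ∑ t ∈ (VTset q n).filter (fun t => ¬ t.1 ∈ Aset q n ∧ t.2.1 ∈ Aset q n),
          Efun p q n e x y z t :=
        Finset.sum_fiberwise_of_maps_to
          (fun t ht => (Finset.mem_filter.mp ht).2.2) (Efun p q n e x y z)

lemma hclass3 (x y z : H) : (∑ g0 : G, ∑ c : ↥(Aset q n), T3 p q n e g0 c x y z)
    = ∑ t ∈ (VTset q n).filter (fun t => ¬ t.1 ∈ Aset q n ∧ ¬ t.2.1 ∈ Aset q n),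
        Efun p q n e x y z t := by
  have step1 : ∀ (g0 : G) (c : ↥(Aset q n)), T3 p q n e g0 c x y z
      = ∑ t ∈ (VTset q n).filter
          (fun t => t.2.2 = (c : Fin n → Fin q) ∧ t.1 ∉ Aset q n ∧ t.2.1 ∉ Aset q n),
          ((if (e x).2 + (e y).2 = -g0 then phi1 p q n e t.1 x * phi1 p q n e t.2.1 y else 0)
            * (if (e z).2 = g0 then phi3 p q n e t.2.2 z else 0)) := by
    intro g0 c
    simp only [T3]
    rw [Finset.sum_mul]
    exact Finset.sum_congr rfl fun t ht => by rw [(mem_filter.mp ht).2.1]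
  calc (∑ g0 : G, ∑ c : ↥(Aset q n), T3 p q n e g0 c x y z)
      = ∑ c : ↥(Aset q n), ∑ t ∈ (VTset q n).filter
          (fun t => t.2.2 = (c : Fin n → Fin q) ∧ t.1 ∉ Aset q n ∧ t.2.1 ∉ Aset q n),
          ∑ g0 : G, ((if (e x).2 + (e y).2 = -g0
              then phi1 p q n e t.1 x * phi1 p q n e t.2.1 y else 0)
            * (if (e z).2 = g0 then phi3 p q n e t.2.2 z else 0)) := by
        simp only [step1]
        rw [Finset.sum_comm]
        exact Finset.sum_congr rfl fun c _ => by rw [Finset.sum_comm]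
    _ = ∑ c : ↥(Aset q n), ∑ t ∈ (VTset q n).filter
          (fun t => t.2.2 = (c : Fin n → Fin q) ∧ t.1 ∉ Aset q n ∧ t.2.1 ∉ Aset q n),
          Efun p q n e x y z t := by
        refine Finset.sum_congr rfl fun c _ => Finset.sum_congr rfl fun t _ => ?_
        rw [CLP.gsum_collapse]
        simp only [Efun]
        have hcond : ((e x).2 + (e y).2 = -(e z).2) ↔
            ((e x).2 + (e y).2 + (e z).2 = 0) := by
          rw [eq_neg_iff_add_eq_zero]
        rw [if_congr hcond rfl rfl]
        split_ifs with hcnd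
        · ring
        · simp
    _ = ∑ c ∈ Aset q n, ∑ t ∈ (VTset q n).filter
          (fun t => t.2.2 = c ∧ t.1 ∉ Aset q n ∧ t.2.1 ∉ Aset q n),
          Efun p q n e x y z t := by
        conv_rhs => rw [← Finset.sum_coe_sort (Aset q n)
          (fun c => ∑ t ∈ (VTset q n).filter
            (fun t => t.2.2 = c ∧ t.1 ∉ Aset q n ∧ t.2.1 ∉ Aset q n),
            Efun p q n e x y z t)]
    _ = ∑ c ∈ Aset q n, ∑ t ∈ ((VTset q n).filter
          (fun t => ¬ t.1 ∈ Aset q n ∧ ¬ t.2.1 ∈ Aset q n)).filter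
          (fun t => t.2.2 = c), Efun p q n e x y z t := by
        refine Finset.sum_congr rfl fun c hc => ?_
        congr 1
        ext tr
        simp only [Finset.mem_filter]
        constructor
        · rintro ⟨h1, h2, h3, h4⟩; exact ⟨⟨h1, h3, h4⟩, h2⟩
        · rintro ⟨⟨h1, h3, h4⟩, h2⟩; exact ⟨h1, h2, h3, h4⟩
    _ = ∑ t ∈ (VTset q n).filter (fun t => ¬ t.1 ∈ Aset q n ∧ ¬ t.2.1 ∈ Aset q n),
          Efun p q n e x y z t :=
        Finset.sum_fiberwise_of_maps_to
          (fun t ht => by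
            have hmem := Finset.mem_filter.mp ht
            exact hmin q n t hmem.1 hmem.2.1 hmem.2.2) (Efun p q n e x y z)

lemma hdecomp (hq : q = p ^ r) (hq1 : 0 < q) :
    ∀ x y z : H, (if x + y + z = 0 then (1 : ZMod p) else 0)
      = ∑ gi : G × (↥(Aset q n) ⊕ ↥(Aset q n) ⊕ ↥(Aset q n)), tt p q n e gi x y z := by
  intro x y z
  have hsplitsum : ∑ t ∈ VTset q n, Efun p q n e x y z t
      = (∑ t ∈ (VTset q n).filter (fun t => t.1 ∈ Aset q n), Efun p q n e x y z t)
        + ((∑ t ∈ (VTset q n).filter (fun t => ¬ t.1 ∈ Aset q n ∧ t.2.1 ∈ Aset q n),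
            Efun p q n e x y z t)
          + (∑ t ∈ (VTset q n).filter (fun t => ¬ t.1 ∈ Aset q n ∧ ¬ t.2.1 ∈ Aset q n),
            Efun p q n e x y z t)) := by
    rw [← Finset.sum_filter_add_sum_filter_not (VTset q n) (fun t => t.1 ∈ Aset q n)
      (Efun p q n e x y z)]
    congr 1
    rw [← Finset.sum_filter_add_sum_filter_not ((VTset q n).filter (fun t => ¬ t.1 ∈ Aset q n))
      (fun t => t.2.1 ∈ Aset q n) (Efun p q n e x y z), Finset.filter_filter,
      Finset.filter_filter]
  rw [hDH p r q n e hq hq1 x y z, hsplitsum, Fintype.sum_prod_type]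
  simp only [tt, Fintype.sum_sum_type, Sum.elim_inl, Sum.elim_inr]
  rw [Finset.sum_add_distrib, Finset.sum_add_distrib, hclass1, hclass2, hclass3]

end Construction

end CLP

set_option maxHeartbeats 1000000 in
/-- Let `H ≅ (ℤ/qℤ)^n × G` be a finite abelian group, `q = p^r` a prime power.
Then over `𝔽_p`, `slicerank D_H ≤ |G| · 3 · N(q,n)`, where `N(q,n)` is the
number of tuples `a ∈ {0,…,q−1}^n` with `Σ_i a_i ≤ (q−1)n/3`, and
`D_H (x,y,z) = [x+y+z = 0]`. Consequently every tricolored sum-free set in `H`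
has cardinality at most `3 · |G| · N(q,n)`. -/
theorem sliceRank_D_le_of_equiv (p r q n : ℕ) [Fact p.Prime] (hq : q = p ^ r)
    (hr : 1 ≤ r) {G H : Type*} [AddCommGroup G] [Fintype G]
    [AddCommGroup H] [Fintype H] [DecidableEq H]
    (e : H ≃+ ((Fin n → ZMod q) × G)) :
    sliceRank (fun x y z : H => if x + y + z = 0 then (1 : ZMod p) else 0) ≤
      Fintype.card G * (3 * (Finset.univ.filter fun a : Fin n → Fin q =>
        3 * ∑ i, (a i : ℕ) ≤ (q - 1) * n).card) ∧
    ∀ M : Finset (H × H × H), IsTricoloredSumFree M →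
      M.card ≤ 3 * Fintype.card G * (Finset.univ.filter fun a : Fin n → Fin q =>
        3 * ∑ i, (a i : ℕ) ≤ (q - 1) * n).card := by
  classical
  have hp2 : 2 ≤ p := (Fact.out : p.Prime).two_le
  have hq1 : 0 < q := hq ▸ pow_pos (by omega) r
  haveI : NeZero q := ⟨hq1.ne'⟩
  haveI : NeZero p := ⟨by omega⟩
  haveI hdG : DecidableEq G := Classical.decEq G
  have hNA : CLP.Aset q n = Finset.univ.filter (fun a : Fin n → Fin q =>
      3 * ∑ i, (a i : ℕ) ≤ (q - 1) * n) := rfl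
  rw [← hNA]
  have hcard : Fintype.card (G × (↥(CLP.Aset q n) ⊕ ↥(CLP.Aset q n) ⊕ ↥(CLP.Aset q n)))
      = Fintype.card G * (3 * (CLP.Aset q n).card) := by
    simp only [Fintype.card_prod, Fintype.card_sum, Fintype.card_coe]
    ring
  constructor
  · have hle := CLP.sliceRank_le_of_decomp (CLP.tt p q n e) (CLP.hslice p q n e)
      (CLP.hdecomp p r q n e hq hq1)
    rwa [hcard] at hle
  · intro M hM
    obtain ⟨hM1, hM2⟩ := hM
    have hdg : ∀ P Q R : ↥M, (if P = Q ∧ Q = R then (1 : ZMod p) else 0)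
        = ∑ gi, CLP.tt p q n e gi (P : H × H × H).1 (Q : H × H × H).2.1
            (R : H × H × H).2.2 := by
      intro P Q R
      have hiff : (P = Q ∧ Q = R) ↔
          ((P : H × H × H).1 + (Q : H × H × H).2.1 + (R : H × H × H).2.2 = 0) := by
        constructor
        · rintro ⟨h12, h23⟩
          rw [h12, h23]
          exact hM1 _ R.2
        · intro hh
          obtain ⟨h12, h23⟩ := hM2 _ P.2 _ Q.2 _ R.2 hh
          exact ⟨Subtype.ext h12, Subtype.ext h23⟩
      rw [if_congr hiff rfl rfl]
      exact CLP.hdecomp p r q n e hq hq1 _ _ _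
    have hMle : M.card ≤ Fintype.card
        (G × (↥(CLP.Aset q n) ⊕ ↥(CLP.Aset q n) ⊕ ↥(CLP.Aset q n))) := by
      have hd := CLP.diag_card_le (ι := ↥M) (F := ZMod p)
        (k := Fintype.card (G × (↥(CLP.Aset q n) ⊕ ↥(CLP.Aset q n) ⊕ ↥(CLP.Aset q n))))
        (t := fun j P Q R => CLP.tt p q n e ((Fintype.equivFin _).symm j)
          (P : H × H × H).1 (Q : H × H × H).2.1 (R : H × H × H).2.2)
        (fun j => CLP.isSliceTerm_comp (CLP.hslice p q n e _) _ _ _)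
        (fun x y z => by
          rw [hdg x y z]
          exact (Equiv.sum_comp (Fintype.equivFin _).symm
            (fun gi => CLP.tt p q n e gi (x : H × H × H).1 (y : H × H × H).2.1
              (z : H × H × H).2.2)).symm)
      rwa [Fintype.card_coe] at hd
    rw [hcard] at hMle
    have harith : Fintype.card G * (3 * (CLP.Aset q n).card)
        = 3 * Fintype.card G * (CLP.Aset q n).card := by ring
    omega
end

section
/- Let H be a finite abelian group containing a border tricolored sum-free set of cardinality |M| and range t. Then for every natural number N there exists a (genuine) tricolored sum-free set in H^N of cardinality at least |M|^N / (2Nt+1)^3. -/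
open Finset

/-!
Raising a border tricolored sum-free set to the `N`-th power and adding up the weights
coordinatewise gives again a border tricolored sum-free set: for a mixed triple summing to
zero every coordinate contributes a nonnegative weight, so a nonpositive total forces each
coordinate triple to lie on the matching. Each weight of the power lies in `[-Nt, Nt]`, so
by pigeonhole one of the at most `(2Nt+1)³` weight classes carries a `(2Nt+1)⁻³` fraction
of the power. Within a weight class a mixed triple has total weight `0`, hence lies on the
matching: the class is a genuine tricolored sum-free set.
-/

theorem Finset.exists_card_le_mul_card_fiber {α β : Type*} [DecidableEq β] {s : Finset α}
    {t : Finset β} {f : α → β} (hf : ∀ a ∈ s, f a ∈ t) (ht : t.Nonempty) :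
    ∃ y ∈ t, #s ≤ #t * #{x ∈ s | f x = y} := by
  apply exists_le_of_sum_le ht
  rw [← mul_sum, ← card_eq_sum_card_fiberwise hf, sum_const, smul_eq_mul]

theorem abs_sum_le_card_mul {ι : Type*} [Fintype ι] {f : ι → ℤ} {t : ℤ}
    (hf : ∀ i, |f i| ≤ t) : |∑ i, f i| ≤ Fintype.card ι * t :=
  calc |∑ i, f i| ≤ ∑ i, |f i| := abs_sum_le_sum_abs _ _
    _ ≤ ∑ _i : ι, t := sum_le_sum fun i _ => hf i
    _ = Fintype.card ι * t := by simp

section BorderTricolored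

variable {H : Type*} (ι : Type*) [Fintype ι] [DecidableEq ι]
variable {M : Finset (H × H × H)} {α β γ : H → ℤ}

def piTripleEquiv (ι H : Type*) : (ι → H × H × H) ≃ (ι → H) × (ι → H) × (ι → H) where
  toFun p := (fun i => (p i).1, fun i => (p i).2.1, fun i => (p i).2.2)
  invFun x i := (x.1 i, x.2.1 i, x.2.2 i)
  left_inv _ := rfl
  right_inv _ := rfl

def piPower (M : Finset (H × H × H)) : Finset ((ι → H) × (ι → H) × (ι → H)) :=
  (Fintype.piFinset fun _ : ι => M).map (piTripleEquiv ι H).toEmbedding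

theorem mem_piPower {x : (ι → H) × (ι → H) × (ι → H)} :
    x ∈ piPower ι M ↔ ∃ p : ι → H × H × H, (∀ i, p i ∈ M) ∧ piTripleEquiv ι H p = x := by
  simp only [piPower, mem_map, Fintype.mem_piFinset, Equiv.coe_toEmbedding]

theorem card_piPower : #(piPower ι M) = #M ^ Fintype.card ι := by
  simp [piPower]

def WeightRangeLE (M : Finset (H × H × H)) (α β γ : H → ℤ) (t : ℤ) : Prop :=
  ∀ p ∈ M, |α p.1| ≤ t ∧ |β p.2.1| ≤ t ∧ |γ p.2.2| ≤ t

theorem WeightRangeLE.piPower {t : ℤ} (h : WeightRangeLE M α β γ t) :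
    WeightRangeLE (piPower ι M) (fun x => ∑ i, α (x i)) (fun x => ∑ i, β (x i))
      (fun x => ∑ i, γ (x i)) (Fintype.card ι * t) := by
  intro x hx
  obtain ⟨p, hp, rfl⟩ := (mem_piPower ι).mp hx
  exact ⟨abs_sum_le_card_mul fun i => (h _ (hp i)).1, abs_sum_le_card_mul fun i => (h _ (hp i)).2.1,
    abs_sum_le_card_mul fun i => (h _ (hp i)).2.2⟩

variable [AddCommGroup H]

structure IsBorderTricolored (M : Finset (H × H × H)) (α β γ : H → ℤ) : Prop where
  sum_eq_zero : ∀ p ∈ M, p.1 + p.2.1 + p.2.2 = 0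
  weight_eq_zero : ∀ p ∈ M, α p.1 + β p.2.1 + γ p.2.2 = 0
  eq_of_weight_nonpos : ∀ p ∈ M, ∀ q ∈ M, ∀ s ∈ M, p.1 + q.2.1 + s.2.2 = 0 →
    α p.1 + β q.2.1 + γ s.2.2 ≤ 0 → p = q ∧ q = s

namespace IsBorderTricolored

theorem weight_nonneg (h : IsBorderTricolored M α β γ) {p q s : H × H × H} (hp : p ∈ M)
    (hq : q ∈ M) (hs : s ∈ M) (hsum : p.1 + q.2.1 + s.2.2 = 0) :
    0 ≤ α p.1 + β q.2.1 + γ s.2.2 := by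
  by_contra! hneg
  obtain ⟨rfl, rfl⟩ := h.eq_of_weight_nonpos p hp q hq s hs hsum hneg.le
  exact hneg.ne (h.weight_eq_zero p hp)

/-- On a single weight class the total weight of any triple of `S × T × U` is `0`. -/
theorem isTricoloredSumFree_filter (h : IsBorderTricolored M α β γ) (y : ℤ × ℤ × ℤ) :
    IsTricoloredSumFree {p ∈ M | (α p.1, β p.2.1, γ p.2.2) = y} := by
  refine ⟨fun p hp => h.sum_eq_zero p (mem_filter.mp hp).1, ?_⟩
  intro p hp q hq s hs hsum
  simp only [mem_filter, Prod.ext_iff] at hp hq hs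
  refine h.eq_of_weight_nonpos p hp.1 q hq.1 s hs.1 hsum (le_of_eq ?_)
  rw [hq.2.2.1, hs.2.2.2, ← hp.2.2.1, ← hp.2.2.2]
  exact h.weight_eq_zero p hp.1

theorem exists_isTricoloredSumFree_card_le (h : IsBorderTricolored M α β γ) {t : ℕ}
    (hrange : WeightRangeLE M α β γ t) :
    ∃ M' : Finset (H × H × H), IsTricoloredSumFree M' ∧ #M ≤ #M' * (2 * t + 1) ^ 3 := by
  set J : Finset ℤ := Icc (-(t : ℤ)) t
  have hJ : #J = 2 * t + 1 := by simp only [J, Int.card_Icc]; omega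
  have hmaps : ∀ p ∈ M, (α p.1, β p.2.1, γ p.2.2) ∈ J ×ˢ J ×ˢ J := fun p hp => by
    simpa only [J, mem_product, mem_Icc, ← abs_le] using hrange p hp
  obtain ⟨y, -, hy⟩ := exists_card_le_mul_card_fiber hmaps ⟨(0, 0, 0), by simp [J]⟩
  refine ⟨_, h.isTricoloredSumFree_filter y, ?_⟩
  rwa [card_product, card_product, hJ, ← pow_three, mul_comm] at hy

end IsBorderTricolored

theorem IsBorderTricolored.piPower (h : IsBorderTricolored M α β γ) :
    IsBorderTricolored (piPower ι M) (fun x => ∑ i, α (x i)) (fun x => ∑ i, β (x i))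
      (fun x => ∑ i, γ (x i)) := by
  constructor
  · intro x hx
    obtain ⟨p, hp, rfl⟩ := (mem_piPower ι).mp hx
    exact funext fun i => h.sum_eq_zero _ (hp i)
  · intro x hx
    obtain ⟨p, hp, rfl⟩ := (mem_piPower ι).mp hx
    simp only [piTripleEquiv, Equiv.coe_fn_mk, ← sum_add_distrib]
    exact Finset.sum_eq_zero fun i _ => h.weight_eq_zero _ (hp i)
  · intro x hx y hy z hz hsum hweight
    obtain ⟨p, hp, rfl⟩ := (mem_piPower ι).mp hx
    obtain ⟨q, hq, rfl⟩ := (mem_piPower ι).mp hy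
    obtain ⟨s, hs, rfl⟩ := (mem_piPower ι).mp hz
    have hsum_at : ∀ i, (p i).1 + (q i).2.1 + (s i).2.2 = 0 := fun i => congrFun hsum i
    have hnonneg : ∀ i ∈ univ, 0 ≤ α (p i).1 + β (q i).2.1 + γ (s i).2.2 := fun i _ =>
      h.weight_nonneg (hp i) (hq i) (hs i) (hsum_at i)
    have hzero : ∑ i, (α (p i).1 + β (q i).2.1 + γ (s i).2.2) = 0 := by
      simp only [piTripleEquiv, Equiv.coe_fn_mk] at hweight
      rw [sum_add_distrib, sum_add_distrib]
      exact le_antisymm hweight (by simpa only [sum_add_distrib] using sum_nonneg hnonneg)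
    have hcoord : ∀ i, p i = q i ∧ q i = s i := fun i =>
      h.eq_of_weight_nonpos _ (hp i) _ (hq i) _ (hs i) (hsum_at i)
        ((sum_eq_zero_iff_of_nonneg hnonneg).mp hzero i (mem_univ i)).le
    exact ⟨congrArg _ (funext fun i => (hcoord i).1),
      congrArg _ (funext fun i => (hcoord i).2)⟩

end BorderTricolored

theorem exists_tricolored_of_border_general {H : Type*} [AddCommGroup H]
    (M : Finset (H × H × H)) (α β γ : H → ℤ) (t : ℕ)
    (hzero : ∀ p ∈ M, p.1 + p.2.1 + p.2.2 = 0 ∧ α p.1 + β p.2.1 + γ p.2.2 = 0)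
    (hoff : ∀ p ∈ M, ∀ q ∈ M, ∀ s ∈ M, p.1 + q.2.1 + s.2.2 = 0 →
      α p.1 + β q.2.1 + γ s.2.2 ≤ 0 → p = q ∧ q = s)
    (hrange : ∀ p ∈ M, |α p.1| ≤ (t : ℤ) ∧ |β p.2.1| ≤ (t : ℤ) ∧ |γ p.2.2| ≤ (t : ℤ))
    (N : ℕ) :
    ∃ M' : Finset ((Fin N → H) × (Fin N → H) × (Fin N → H)),
      IsTricoloredSumFree M' ∧ M.card ^ N ≤ M'.card * (2 * N * t + 1) ^ 3 := by
  have hborder : IsBorderTricolored M α β γ :=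
    ⟨fun p hp => (hzero p hp).1, fun p hp => (hzero p hp).2, hoff⟩
  have hrange_pow := (show WeightRangeLE M α β γ t from hrange).piPower (Fin N)
  rw [Fintype.card_fin, ← Nat.cast_mul] at hrange_pow
  obtain ⟨M', hM', hcard⟩ :=
    (hborder.piPower (Fin N)).exists_isTricoloredSumFree_card_le hrange_pow
  rw [card_piPower, Fintype.card_fin, ← mul_assoc] at hcard
  exact ⟨M', hM', hcard⟩

/-- If a finite abelian group `H` contains a border tricolored sum-free set of
cardinality `|M|` and range `t`, then for every `N` there is a genuine
tricolored sum-free set in `H^N` of cardinality at least `|M|^N/(2Nt+1)³`. -/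
theorem exists_tricolored_of_border {H : Type*} [AddCommGroup H] [Fintype H]
    [DecidableEq H] (M : Finset (H × H × H)) (α β γ : H → ℤ) (t : ℕ)
    (hzero : ∀ p ∈ M, p.1 + p.2.1 + p.2.2 = 0 ∧ α p.1 + β p.2.1 + γ p.2.2 = 0)
    (hoff : ∀ p ∈ M, ∀ q ∈ M, ∀ s ∈ M, p.1 + q.2.1 + s.2.2 = 0 →
      α p.1 + β q.2.1 + γ s.2.2 ≤ 0 → p = q ∧ q = s)
    (hrange : ∀ p ∈ M, |α p.1| ≤ (t : ℤ) ∧ |β p.2.1| ≤ (t : ℤ) ∧ |γ p.2.2| ≤ (t : ℤ))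
    (N : ℕ) :
    ∃ M' : Finset ((Fin N → H) × (Fin N → H) × (Fin N → H)),
      IsTricoloredSumFree M' ∧ M.card ^ N ≤ M'.card * (2 * N * t + 1) ^ 3 :=
  exists_tricolored_of_border_general M α β γ t hzero hoff hrange N
end
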